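/- arXiv:2303.14776 — 5 statements merged into one kernel-verified Lean document; each statement's English description precedes it below -/
import Mathlib

section
/- Let p be a prime, Γ a profinite group, and A a profinite Γ-module, i.e. a profinite abelian group (written additively) with a continuous right action of Γ by topological group automorphisms. For x ∈ Γ write A(x−1) := {a·x − a : a ∈ A} (a closed subgroup of A), let A(Γ−1) denote the closed subgroup of A topologically generated by all elements a·x − a (a ∈ A, x ∈ Γ), and let pA := {p·a : a ∈ A}. Assume: (1) for all a ∈ A and x ∈ Γ, a·x = a implies a = 0 or x = 1; (2) pA + A(Γ−1) is a proper subgroup of A; (3) the intersection of A(x−1) over all x ∈ Γ with x ≠ 1 is 0. Then both Γ and A are pro-p groups. -/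
open Filter Topology

section ProPAux

/-- In a profinite group, every neighborhood of `1` contains an open normal subgroup. -/
private lemma aux_nhds_one_subgroup {Γ : Type*} [Group Γ] [TopologicalSpace Γ]
    [IsTopologicalGroup Γ] [CompactSpace Γ] [T2Space Γ] [TotallyDisconnectedSpace Γ]
    {W : Set Γ} (hW : W ∈ 𝓝 1) :
    ∃ H : OpenNormalSubgroup Γ, (H : Set Γ) ⊆ W := by
  obtain ⟨V, ⟨h1V, hVc⟩, hVW⟩ := (nhds_basis_clopen (1 : Γ)).mem_iff.mp hW
  obtain ⟨H, hH⟩ := IsTopologicalGroup.exist_openNormalSubgroup_sub_clopen_nhds_of_one hVc h1V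
  exact ⟨H, hH.trans hVW⟩

/-- In a profinite additive group, every neighborhood of `0` contains an open subgroup. -/
private lemma aux_nhds_zero_subgroup {A : Type*} [AddGroup A] [TopologicalSpace A]
    [IsTopologicalAddGroup A] [CompactSpace A] [T2Space A] [TotallyDisconnectedSpace A]
    {W : Set A} (hW : W ∈ 𝓝 0) :
    ∃ H : OpenAddSubgroup A, (H : Set A) ⊆ W := by
  obtain ⟨V, ⟨h0V, hVc⟩, hVW⟩ := (nhds_basis_clopen (0 : A)).mem_iff.mp hW
  obtain ⟨H, hH⟩ := IsTopologicalAddGroup.exist_openAddSubgroup_sub_clopen_nhds_of_zero hVc h0V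
  exact ⟨H, hH.trans hVW⟩

/-- A cluster point of a sequence eventually in a closed set belongs to that set. -/
private lemma aux_cluster_mem {X : Type*} [TopologicalSpace X] {u : ℕ → X} {c : X}
    (h : MapClusterPt c atTop u) {S : Set X} (hS : IsClosed S)
    (he : ∀ᶠ n in atTop, u n ∈ S) : c ∈ S := by
  have hle : map u atTop ≤ 𝓟 S := le_principal_iff.mpr (mem_map.mpr he)
  have h' : ClusterPt c (𝓟 S) := ClusterPt.mono h hle
  rw [← hS.closure_eq]
  exact mem_closure_iff_clusterPt.mpr h'

/-- If every prime dividing `d` equals `p`, then `d` is a power of `p`. -/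
private lemma aux_exists_prime_ne_dvd {p d : ℕ} (hp : p.Prime) (hd : d ≠ 0)
    (h : ¬ ∃ n : ℕ, d = p ^ n) : ∃ q : ℕ, q.Prime ∧ q ≠ p ∧ q ∣ d := by
  set m := d / p ^ d.factorization p with hm
  have hm1 : m ≠ 1 := by
    intro h1
    refine h ⟨d.factorization p, ?_⟩
    have hh := Nat.ordProj_mul_ordCompl_eq_self d p
    rw [← hm, h1, mul_one] at hh
    exact hh.symm
  obtain ⟨q, hq, hqm⟩ := Nat.exists_prime_and_dvd hm1
  refine ⟨q, hq, ?_, hqm.trans (Nat.ordCompl_dvd d p)⟩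
  rintro rfl
  exact Nat.not_dvd_ordCompl hp hd hqm

variable {Γ : Type*} [Group Γ] {A : Type*} [AddCommGroup A]

/-- The additive morphism `a ↦ a·x − a`. -/
private def actHom (act : A → Γ → A)
    (hadd : ∀ (x : Γ) (a b : A), act (a + b) x = act a x + act b x) (x : Γ) : A →+ A where
  toFun b := act b x - b
  map_zero' := by
    have h := hadd x 0 0
    rw [add_zero] at h
    show act 0 x - 0 = 0
    rw [left_eq_add.mp h, sub_zero]
  map_add' a b := by
    show act (a + b) x - (a + b) = (act a x - a) + (act b x - b)
    rw [hadd]; abel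

private lemma actHom_apply (act : A → Γ → A)
    (hadd : ∀ (x : Γ) (a b : A), act (a + b) x = act a x + act b x) (x : Γ) (b : A) :
    actHom act hadd x b = act b x - b := rfl

/-- Telescoping identity for the "norm" sums. -/
private lemma aux_key (act : A → Γ → A)
    (hadd : ∀ (x : Γ) (a b : A), act (a + b) x = act a x + act b x)
    (hone : ∀ a : A, act a 1 = a)
    (hmul : ∀ (a : A) (x y : Γ), act (act a x) y = act a (x * y))
    (x : Γ) (a : A) : ∀ k : ℕ,
    actHom act hadd x (∑ i ∈ Finset.range k, act a (x ^ i)) = act a (x ^ k) - a := by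
  intro k
  induction k with
  | zero =>
    have h := hadd x 0 0
    rw [add_zero] at h
    have h0 : act 0 x = 0 := left_eq_add.mp h
    simp [actHom_apply, pow_zero, hone, h0]
  | succ k ih =>
    rw [Finset.sum_range_succ, map_add, ih, actHom_apply]
    rw [hmul, ← pow_succ]
    abel

private lemma aux_sum_id (act : A → Γ → A) (x : Γ) (a : A) (k : ℕ) :
    k • a - (∑ i ∈ Finset.range k, act a (x ^ i))
      = ∑ i ∈ Finset.range k, (a - act a (x ^ i)) := by
  rw [Finset.sum_sub_distrib, Finset.sum_const, Finset.card_range]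

end ProPAux

open Pointwise

/-- Let `Γ` be a profinite group and `A` a profinite `Γ`-module (a profinite
abelian group with a continuous right `Γ`-action `act` by topological group
automorphisms). If (1) `a·x = a` implies `a = 0` or `x = 1`; (2) `pA + A(Γ−1)`
is a proper subgroup of `A` (where `A(Γ−1)` is the closed subgroup topologically
generated by the elements `a·x − a`); and (3) `⋂_{x ≠ 1} A(x−1) = 0`, then both
`Γ` and `A` are pro-`p` groups (every open normal subgroup has `p`-power index). -/
theorem gamma_and_module_are_pro_p (p : ℕ) (hp : p.Prime)
    (Γ : Type*) [Group Γ] [TopologicalSpace Γ] [IsTopologicalGroup Γ]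
    [CompactSpace Γ] [T2Space Γ] [TotallyDisconnectedSpace Γ]
    (A : Type*) [AddCommGroup A] [TopologicalSpace A] [IsTopologicalAddGroup A]
    [CompactSpace A] [T2Space A] [TotallyDisconnectedSpace A]
    (act : A → Γ → A)
    (hact_add : ∀ (x : Γ) (a b : A), act (a + b) x = act a x + act b x)
    (hact_one : ∀ a : A, act a 1 = a)
    (hact_mul : ∀ (a : A) (x y : Γ), act (act a x) y = act a (x * y))
    (hact_cont : Continuous fun q : A × Γ => act q.1 q.2)
    (h1 : ∀ (a : A) (x : Γ), act a x = a → a = 0 ∨ x = 1)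
    (h2 : (AddSubgroup.closure {b : A | ∃ a : A, b = p • a} ⊔
        (AddSubgroup.closure
          {b : A | ∃ (a : A) (x : Γ), b = act a x - a}).topologicalClosure) ≠ ⊤)
    (h3 : (⋂ x ∈ {x : Γ | x ≠ 1}, {c : A | ∃ a : A, c = act a x - a}) = {(0 : A)}) :
    (∀ N : Subgroup Γ, N.Normal → IsOpen (N : Set Γ) → ∃ n : ℕ, N.index = p ^ n) ∧
    (∀ N : AddSubgroup A, IsOpen (N : Set A) → ∃ n : ℕ, N.index = p ^ n) := by
  classical
  -- continuity of b ↦ b·x − b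
  have cont_fx : ∀ x : Γ, Continuous (fun b : A => act b x - b) := by
    intro x
    exact (hact_cont.comp (continuous_id.prodMk continuous_const)).sub continuous_id
  -- injectivity of b ↦ b·x − b for x ≠ 1
  have inj_fx : ∀ x : Γ, x ≠ 1 → Function.Injective (actHom act hact_add x) := by
    intro x hx
    rw [injective_iff_map_eq_zero]
    intro b hb
    rw [actHom_apply, sub_eq_zero] at hb
    rcases h1 b x hb with h | h
    · exact h
    · exact absurd h hx
  -- the key convergence: norms tend to zero
  have norm_small : ∀ (x : Γ), x ≠ 1 → ∀ (a : A) (k : ℕ → ℕ),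
      Tendsto (fun n => x ^ k n) atTop (𝓝 1) →
      Tendsto (fun n => ∑ i ∈ Finset.range (k n), act a (x ^ i)) atTop (𝓝 0) := by
    intro x hx a k hk
    have hce : IsClosedEmbedding (actHom act hact_add x) :=
      Continuous.isClosedEmbedding (by exact cont_fx x) (inj_fx x hx)
    rw [hce.isEmbedding.tendsto_nhds_iff]
    have h0 : actHom act hact_add x 0 = 0 := map_zero _
    rw [h0]
    have hcont : Continuous (fun y : Γ => act a y - a) :=
      (hact_cont.comp (continuous_const.prodMk continuous_id)).sub continuous_const
    have : Tendsto (fun n => act a (x ^ k n) - a) atTop (𝓝 0) := by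
      have := (hcont.tendsto 1).comp hk
      simpa [hact_one, Function.comp_def] using this
    refine this.congr ?_
    intro n
    simp only [Function.comp_apply]
    rw [aux_key act hact_add hact_one hact_mul x a (k n)]
  -- Part 1 : Γ is pro-p
  have partΓ : ∀ N : Subgroup Γ, N.Normal → IsOpen (N : Set Γ) → ∃ n : ℕ, N.index = p ^ n := by
    intro N hNnorm hNopen
    by_contra hcon
    haveI hfin : Finite (Γ ⧸ N) := N.quotient_finite_of_isOpen hNopen
    have hd0 : N.index ≠ 0 := by
      rw [Subgroup.index_eq_card]
      exact Nat.card_pos.ne'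
    obtain ⟨q, hq, hqp, hqdvd⟩ := aux_exists_prime_ne_dvd hp hd0 hcon
    haveI := Fact.mk hq
    obtain ⟨xbar, hxbar⟩ := exists_prime_orderOf_dvd_card' (G := Γ ⧸ N) q
      (by rwa [← Subgroup.index_eq_card])
    obtain ⟨x, rfl⟩ := QuotientGroup.mk'_surjective N xbar
    -- cluster point z of x ^ (p ^ i!)
    set c : ℕ → Γ := fun i => x ^ (p ^ (Nat.factorial i)) with hc
    obtain ⟨z, hz⟩ := exists_clusterPt_of_compactSpace (map c atTop)
    have hz' : MapClusterPt z atTop c := hz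
    -- z ≠ 1
    have hzne : z ≠ 1 := by
      intro h
      subst h
      have hfr : ∃ᶠ i in atTop, c i ∈ (N : Set Γ) :=
        (mapClusterPt_iff_frequently.mp hz') _ (hNopen.mem_nhds N.one_mem)
      obtain ⟨i, hi⟩ := hfr.exists
      have h1' : (QuotientGroup.mk' N x) ^ (p ^ (Nat.factorial i)) = 1 := by
        rw [← map_pow]
        exact (QuotientGroup.eq_one_iff _).mpr hi
      have hdvd := orderOf_dvd_of_pow_eq_one h1'
      rw [hxbar] at hdvd
      exact hqp ((Nat.prime_dvd_prime_iff_eq hq hp).mp (hq.dvd_of_dvd_pow hdvd))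
    -- the p'-exponents
    set k : ℕ → ℕ := fun n => (Nat.factorial n) / p ^ ((Nat.factorial n)).factorization p with hk
    have hkcop : ∀ n : ℕ, Nat.Coprime (k n) p := fun n =>
      (Nat.coprime_ordCompl hp (Nat.factorial_ne_zero n)).symm
    -- z ^ (k n) → 1
    have hzk : Tendsto (fun n => z ^ k n) atTop (𝓝 1) := by
      rw [Filter.tendsto_def]
      intro W hW
      obtain ⟨U, hU⟩ := aux_nhds_one_subgroup hW
      haveI : Finite (Γ ⧸ U.toSubgroup) :=
        U.toSubgroup.quotient_finite_of_isOpen U.isOpen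
      set o := orderOf (QuotientGroup.mk' U.toSubgroup x) with ho
      have ho0 : o ≠ 0 := (orderOf_pos _).ne'
      -- frequently x^(p^i!) lies in the coset z·U
      have hopen : IsOpen {w : Γ | z⁻¹ * w ∈ U.toSubgroup} :=
        U.isOpen.preimage (continuous_const.mul continuous_id)
      have hmemz : z ∈ {w : Γ | z⁻¹ * w ∈ U.toSubgroup} := by
        show z⁻¹ * z ∈ U.toSubgroup
        rw [inv_mul_cancel]
        exact one_mem _
      have hfr : ∃ᶠ i in atTop, z⁻¹ * c i ∈ U.toSubgroup :=
        (mapClusterPt_iff_frequently.mp hz') _ (hopen.mem_nhds hmemz)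
      obtain ⟨i, hio, hiU⟩ := ((eventually_ge_atTop o).and_frequently hfr).exists
      have hmkz : QuotientGroup.mk' U.toSubgroup z
          = (QuotientGroup.mk' U.toSubgroup x) ^ (p ^ (Nat.factorial i)) := by
        have : QuotientGroup.mk' U.toSubgroup z = QuotientGroup.mk' U.toSubgroup (c i) :=
          (QuotientGroup.eq).mpr hiU
        rw [this, hc, map_pow]
      have he_le : o.factorization p ≤ (Nat.factorial i) := by
        calc o.factorization p ≤ p ^ o.factorization p := (Nat.lt_pow_self hp.one_lt).le
        _ ≤ o := Nat.le_of_dvd (Nat.pos_of_ne_zero ho0) (Nat.ordProj_dvd o p)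
        _ ≤ i := hio
        _ ≤ (Nat.factorial i) := Nat.self_le_factorial i
      show ∀ᶠ n in atTop, z ^ k n ∈ W
      rw [Filter.eventually_atTop]
      refine ⟨o, fun n hn => ?_⟩
      apply hU
      have hdvd : o ∣ p ^ (Nat.factorial i) * k n := by
        have h1' : p ^ o.factorization p ∣ p ^ (Nat.factorial i) := pow_dvd_pow p he_le
        have hm1 : (o / p ^ o.factorization p) ∣ (Nat.factorial n) :=
          Nat.dvd_factorial (Nat.ordCompl_pos p ho0) (le_trans (Nat.div_le_self o _) hn)
        have hm2 : (o / p ^ o.factorization p) ∣ k n := by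
          have hco : Nat.Coprime (o / p ^ o.factorization p) (p ^ ((Nat.factorial n)).factorization p) :=
            ((Nat.coprime_ordCompl hp ho0).symm).pow_right _
          refine hco.dvd_of_dvd_mul_left ?_
          rw [hk]
          calc (o / p ^ o.factorization p) ∣ (Nat.factorial n) := hm1
          _ = p ^ ((Nat.factorial n)).factorization p * ((Nat.factorial n) / p ^ ((Nat.factorial n)).factorization p) :=
              (Nat.ordProj_mul_ordCompl_eq_self ((Nat.factorial n)) p).symm
        calc o = p ^ o.factorization p * (o / p ^ o.factorization p) :=
            (Nat.ordProj_mul_ordCompl_eq_self o p).symm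
        _ ∣ p ^ (Nat.factorial i) * k n := mul_dvd_mul h1' hm2
      have hmm : z ^ k n ∈ U.toSubgroup := by
        haveI := U.isNormal'
        rw [← QuotientGroup.eq_one_iff (z ^ k n)]
        have : (QuotientGroup.mk' U.toSubgroup) (z ^ k n) = 1 := by
          rw [map_pow, hmkz, ← pow_mul]
          exact orderOf_dvd_iff_pow_eq_one.mp hdvd
        exact this
      exact hmm
    -- derive the contradiction with h2
    apply h2
    rw [AddSubgroup.eq_top_iff']
    intro a
    set P := AddSubgroup.closure {b : A | ∃ a : A, b = p • a} with hP
    set D := AddSubgroup.closure {b : A | ∃ (a : A) (x : Γ), b = act a x - a} with hD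
    -- closedness of the sup
    have hPset : (P : Set A) = Set.range (fun a : A => p • a) := by
      have hsets : {b : A | ∃ a : A, b = p • a} = Set.range (fun a : A => p • a) := by
        ext b
        constructor <;> rintro ⟨a0, h⟩ <;> exact ⟨a0, h.symm⟩
      have : P = AddSubgroup.closure (Set.range (fun a : A => p • a)) := by
        rw [hP, hsets]
      rw [this]
      have hrange : Set.range (fun a : A => p • a)
          = ((AddMonoidHom.mk' (fun a : A => (p : ℤ) • a)
              (fun a b => smul_add ((p : ℤ)) a b)).range : Set A) := by
        ext b
        constructor
        · rintro ⟨a, rfl⟩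
          exact ⟨a, by simp [natCast_zsmul]⟩
        · rintro ⟨a, rfl⟩
          exact ⟨a, by simp [natCast_zsmul]⟩
      rw [hrange, AddSubgroup.closure_eq]
    have hPcpt : IsCompact (P : Set A) := by
      rw [hPset]
      exact isCompact_range (continuous_id.nsmul p)
    have hBclosed : IsClosed ((P ⊔ D.topologicalClosure : AddSubgroup A) : Set A) := by
      have hset : ((P ⊔ D.topologicalClosure : AddSubgroup A) : Set A)
          = (P : Set A) + (D.topologicalClosure : Set A) := by
        ext b
        constructor
        · intro hb
          obtain ⟨y, hy, z', hz', rfl⟩ := AddSubgroup.mem_sup.mp hb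
          exact Set.add_mem_add hy hz'
        · rintro hb
          obtain ⟨y, hy, z', hz', rfl⟩ := Set.mem_add.mp hb
          exact AddSubgroup.mem_sup.mpr ⟨y, hy, z', hz', rfl⟩
      rw [hset]
      exact (hPcpt.add ((AddSubgroup.isClosed_topologicalClosure D).isCompact)).isClosed
    have haB : a ∈ closure ((P ⊔ D.topologicalClosure : AddSubgroup A) : Set A) := by
      rw [mem_closure_iff_nhds]
      intro t ht
      have hpre : {v : A | a + v ∈ t} ∈ 𝓝 (0 : A) := by
        have htt : Tendsto (fun v : A => a + v) (𝓝 0) (𝓝 a) := by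
          simpa using ((continuous_add_left a).tendsto 0)
        exact htt ht
      obtain ⟨V, hV⟩ := aux_nhds_zero_subgroup hpre
      have hnorm := norm_small z hzne a k hzk
      have hev : ∀ᶠ n in atTop,
          (∑ i ∈ Finset.range (k n), act a (z ^ i)) ∈ (V : Set A) := by
        have := hnorm (V.mem_nhds_zero)
        rwa [Filter.mem_map] at this
      obtain ⟨n, hn⟩ := hev.exists
      set Nn := ∑ i ∈ Finset.range (k n), act a (z ^ i) with hNn
      -- Bezout
      obtain ⟨u, v, huv⟩ : IsCoprime ((k n : ℤ)) ((p : ℤ)) :=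
        Nat.isCoprime_iff_coprime.mpr (hkcop n)
      have hdecomp : a = u • ((k n) • a) + v • (p • a) := by
        calc a = ((u * (k n : ℤ) + v * (p : ℤ)) • a) := by rw [huv, one_smul]
        _ = u • ((k n : ℤ) • a) + v • ((p : ℤ) • a) := by rw [add_smul, mul_smul, mul_smul]
        _ = u • ((k n) • a) + v • (p • a) := by rw [natCast_zsmul, natCast_zsmul]
      -- membership of the main part
      have hKa : (k n) • a - Nn ∈ D := by
        rw [hNn, aux_sum_id act z a (k n)]
        refine AddSubgroup.sum_mem D ?_
        intro i _
        have hmem : act a (z ^ i) - a ∈ D := AddSubgroup.subset_closure ⟨a, z ^ i, rfl⟩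
        have := D.neg_mem hmem
        rwa [neg_sub] at this
      set b : A := u • ((k n) • a - Nn) + v • (p • a) with hb
      have hbB : b ∈ (P ⊔ D.topologicalClosure : AddSubgroup A) := by
        refine AddSubgroup.add_mem _ ?_ ?_
        · exact AddSubgroup.mem_sup_right
            (AddSubgroup.zsmul_mem _ (D.le_topologicalClosure hKa) u)
        · refine AddSubgroup.mem_sup_left
            (AddSubgroup.zsmul_mem _ (AddSubgroup.subset_closure ?_) v)
          exact ⟨a, rfl⟩
      have h1s : u • Nn + u • ((k n) • a - Nn) = u • ((k n) • a) := by
        rw [← smul_add]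
        congr 1
        abel
      have hab : u • Nn + b = a := by
        rw [hb]
        calc u • Nn + (u • ((k n) • a - Nn) + v • (p • a))
            = (u • Nn + u • ((k n) • a - Nn)) + v • (p • a) := by abel
        _ = u • ((k n) • a) + v • (p • a) := by rw [h1s]
        _ = a := hdecomp.symm
      have hbt : b ∈ t := by
        have hvm : -(u • Nn) ∈ (V : Set A) := V.toAddSubgroup.neg_mem
          (V.toAddSubgroup.zsmul_mem hn u)
        have heq : a + (-(u • Nn)) = b := by rw [← hab]; abel
        have := hV hvm
        simp only [Set.mem_setOf_eq] at this
        rwa [heq] at this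
      exact ⟨b, hbt, hbB⟩
    rw [hBclosed.closure_eq] at haB
    exact haB
  refine ⟨partΓ, ?_⟩
  -- Part 2 : A is pro-p
  intro M hMopen
  by_contra hcon
  haveI hfin : Finite (A ⧸ M) := M.quotient_finite_of_isOpen hMopen
  have hd0 : M.index ≠ 0 := by
    rw [AddSubgroup.index_eq_card]
    exact Nat.card_pos.ne'
  obtain ⟨q, hq, hqp, hqdvd⟩ := aux_exists_prime_ne_dvd hp hd0 hcon
  haveI := Fact.mk hq
  obtain ⟨abar, habar⟩ := exists_prime_addOrderOf_dvd_card' (G := A ⧸ M) q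
    (by rwa [← AddSubgroup.index_eq_card])
  obtain ⟨a, rfl⟩ := QuotientAddGroup.mk'_surjective M abar
  -- x ^ (p ^ n!) → 1 for every x, since Γ is pro-p
  have hx1 : ∀ x : Γ, Tendsto (fun n => x ^ (p ^ (Nat.factorial n))) atTop (𝓝 1) := by
    intro x
    rw [Filter.tendsto_def]
    intro W hW
    obtain ⟨U, hU⟩ := aux_nhds_one_subgroup hW
    haveI : Finite (Γ ⧸ U.toSubgroup) :=
      U.toSubgroup.quotient_finite_of_isOpen U.isOpen
    obtain ⟨j, hj⟩ := partΓ U.toSubgroup U.isNormal' U.isOpen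
    have ho : orderOf (QuotientGroup.mk' U.toSubgroup x) ∣ p ^ j := by
      rw [← hj, Subgroup.index_eq_card]
      exact orderOf_dvd_natCard _
    obtain ⟨e, hej, hoe⟩ := (Nat.dvd_prime_pow hp).mp ho
    show ∀ᶠ n in atTop, x ^ (p ^ (Nat.factorial n)) ∈ W
    rw [Filter.eventually_atTop]
    refine ⟨e, fun n hn => ?_⟩
    apply hU
    have hmm : x ^ (p ^ (Nat.factorial n)) ∈ U.toSubgroup := by
      haveI := U.isNormal'
      have hone : (QuotientGroup.mk' U.toSubgroup) (x ^ (p ^ (Nat.factorial n))) = 1 := by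
        rw [map_pow]
        refine orderOf_dvd_iff_pow_eq_one.mp ?_
        rw [hoe]
        exact pow_dvd_pow p (le_trans hn (Nat.self_le_factorial n))
      rw [← QuotientGroup.eq_one_iff (x ^ (p ^ (Nat.factorial n)))]
      exact hone
    exact hmm
  -- cluster point of (p ^ n!) • a
  set s : ℕ → A := fun n => (p ^ (Nat.factorial n)) • a with hs
  obtain ⟨cpt, hcpt⟩ := exists_clusterPt_of_compactSpace (map s atTop)
  have hc : MapClusterPt cpt atTop s := hcpt
  -- the cluster point lies in every A(x−1)
  have hmem : cpt ∈ ⋂ x ∈ {x : Γ | x ≠ 1}, {c : A | ∃ a : A, c = act a x - a} := by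
    simp only [Set.mem_iInter, Set.mem_setOf_eq]
    intro x hx
    show cpt ∈ {c : A | ∃ b : A, c = act b x - b}
    have hSset : {c : A | ∃ b : A, c = act b x - b}
        = ((actHom act hact_add x).range : Set A) := by
      ext c
      simp [actHom_apply, eq_comm]
    have hclosed : IsClosed {c : A | ∃ b : A, c = act b x - b} := by
      rw [hSset]
      have : ((actHom act hact_add x).range : Set A)
          = Set.range (actHom act hact_add x) := by
        ext c; simp [AddMonoidHom.mem_range]
      rw [this]
      exact (isCompact_range (by exact cont_fx x)).isClosed
    rw [← hclosed.closure_eq, mem_closure_iff_nhds]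
    intro t ht
    have hpre : {v : A | cpt + v ∈ t} ∈ 𝓝 (0 : A) := by
      have htt : Tendsto (fun v : A => cpt + v) (𝓝 0) (𝓝 cpt) := by
        simpa using ((continuous_add_left cpt).tendsto 0)
      exact htt ht
    obtain ⟨V, hV⟩ := aux_nhds_zero_subgroup hpre
    have hnorm := norm_small x hx a (fun n => p ^ (Nat.factorial n)) (hx1 x)
    have hev : ∀ᶠ n in atTop,
        (∑ i ∈ Finset.range (p ^ (Nat.factorial n)), act a (x ^ i)) ∈ (V : Set A) := by
      have := hnorm (V.mem_nhds_zero)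
      rwa [Filter.mem_map] at this
    have hopen : IsOpen {w : A | -cpt + w ∈ (V : Set A)} :=
      V.isOpen.preimage (continuous_const.add continuous_id)
    have hmemc : cpt ∈ {w : A | -cpt + w ∈ (V : Set A)} := by
      show -cpt + cpt ∈ (V : Set A)
      rw [neg_add_cancel]
      exact V.toAddSubgroup.zero_mem
    have hfr : ∃ᶠ n in atTop, -cpt + s n ∈ (V : Set A) :=
      (mapClusterPt_iff_frequently.mp hc) _ (hopen.mem_nhds hmemc)
    obtain ⟨n, hn1, hn2⟩ := (hfr.and_eventually hev).exists
    set Nn := ∑ i ∈ Finset.range (p ^ (Nat.factorial n)), act a (x ^ i) with hNn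
    refine ⟨s n - Nn, ?_, ?_⟩
    · -- s n - Nn ∈ t
      have hvm : (-cpt + s n) - Nn ∈ (V : Set A) :=
        V.toAddSubgroup.sub_mem hn1 hn2
      have heq : cpt + ((-cpt + s n) - Nn) = s n - Nn := by abel
      have := hV hvm
      simp only [Set.mem_setOf_eq] at this
      rwa [heq] at this
    · -- s n - Nn ∈ A(x−1)
      have : s n - Nn ∈ (actHom act hact_add x).range := by
        rw [hs]
        simp only
        rw [aux_sum_id act x a (p ^ (Nat.factorial n))]
        refine AddSubgroup.sum_mem _ ?_
        intro i _
        have hmem' : act a (x ^ i) - a ∈ (actHom act hact_add x).range :=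
          ⟨_, aux_key act hact_add hact_one hact_mul x a i⟩
        have := (actHom act hact_add x).range.neg_mem hmem'
        rwa [neg_sub] at this
      rw [hSset]
      exact this
  rw [h3] at hmem
  have hcpt0 : cpt = (0 : A) := hmem
  -- eventually s n ≡ a mod M
  have hev2 : ∀ᶠ n in atTop, s n ∈ {w : A | -a + w ∈ M} := by
    rw [Filter.eventually_atTop]
    refine ⟨q - 1, fun n hn => ?_⟩
    have hmod : p ^ (Nat.factorial n) ≡ 1 [MOD q] := by
      have hcop : Nat.Coprime p q := (Nat.coprime_primes hp hq).mpr (Ne.symm hqp)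
      have ht := Nat.ModEq.pow_totient hcop
      rw [Nat.totient_prime hq] at ht
      have hdvd : (q - 1) ∣ (Nat.factorial n) :=
        Nat.dvd_factorial (by have := hq.two_le; omega) hn
      obtain ⟨tt, htt⟩ := hdvd
      calc p ^ (Nat.factorial n) = (p ^ (q - 1)) ^ tt := by rw [← pow_mul, ← htt]
      _ ≡ 1 ^ tt [MOD q] := ht.pow tt
      _ = 1 := one_pow tt
    have hq1 : q ∣ (p ^ (Nat.factorial n) - 1) :=
      (Nat.modEq_iff_dvd' (Nat.one_le_iff_ne_zero.mpr (pow_ne_zero _ hp.pos.ne'))).mp hmod.symm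
    have hzq : (p ^ (Nat.factorial n) - 1) • (QuotientAddGroup.mk' M a) = 0 :=
      addOrderOf_dvd_iff_nsmul_eq_zero.mp (habar ▸ hq1)
    have hfix : (p ^ (Nat.factorial n)) • (QuotientAddGroup.mk' M a) = QuotientAddGroup.mk' M a := by
      have h1' : p ^ (Nat.factorial n) = (p ^ (Nat.factorial n) - 1) + 1 := by
        have : 1 ≤ p ^ (Nat.factorial n) := Nat.one_le_iff_ne_zero.mpr (pow_ne_zero _ hp.pos.ne')
        omega
      rw [h1', add_nsmul, hzq, zero_add, one_nsmul]
    show -a + s n ∈ M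
    refine (QuotientAddGroup.eq).mp ?_
    have : QuotientAddGroup.mk' M (s n) = QuotientAddGroup.mk' M a := by
      rw [hs]
      simp only
      rw [map_nsmul, hfix]
    exact this.symm
  have hclosedM : IsClosed {w : A | -a + w ∈ M} := by
    have hMc : IsClosed (M : Set A) := M.isClosed_of_isOpen hMopen
    exact hMc.preimage (continuous_const.add continuous_id)
  have hfinal := aux_cluster_mem hc hclosedM hev2
  rw [hcpt0] at hfinal
  have haM : a ∈ M := by
    have : -a + 0 ∈ M := hfinal
    rw [add_zero] at this
    exact (neg_mem_iff).mp this
  have habar0 : QuotientAddGroup.mk' M a = 0 := (QuotientAddGroup.eq_zero_iff a).mpr haM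
  rw [habar0, addOrderOf_zero] at habar
  exact hq.one_lt.ne' habar.symm
end

section
/- Let p be a prime, R = ℤ_p[[ζ]] the ring of formal power series in one variable ζ over ℤ_p, and M = R^(m) a free R-module of rank m ≥ 1. Let K be an R-submodule of M such that: (i) the quotient M/(K + Mζ) is isomorphic as a ℤ_p-module to ℤ_p^(m); and (ii) for all a ∈ M, aζ ∈ K implies a ∈ K. Then K = 0. -/
set_option maxHeartbeats 2000000 in
/-- Let `R = ℤ_p[[ζ]]` and `M = R^(m)` with `m ≥ 1`. If `K` is an `R`-submodule
of `M` such that `M/(K + Mζ) ≅ ℤ_p^(m)` as a `ℤ_p`-module and `aζ ∈ K → a ∈ K`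
for all `a ∈ M`, then `K = 0`. -/
theorem submodule_eq_bot_of_quotient_free (p : ℕ) [Fact p.Prime] (m : ℕ) (hm : 1 ≤ m)
    (K : Submodule (PowerSeries ℤ_[p]) (Fin m → PowerSeries ℤ_[p]))
    (h1 : Nonempty (
      ((Fin m → PowerSeries ℤ_[p]) ⧸
        ((K ⊔ Submodule.map
            (LinearMap.lsmul (PowerSeries ℤ_[p]) (Fin m → PowerSeries ℤ_[p]) PowerSeries.X)
            ⊤).restrictScalars ℤ_[p]))
      ≃ₗ[ℤ_[p]] (Fin m → ℤ_[p])))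
    (h2 : ∀ a : Fin m → PowerSeries ℤ_[p], (PowerSeries.X : PowerSeries ℤ_[p]) • a ∈ K → a ∈ K) :
    K = ⊥ := by
  classical
  set R := PowerSeries ℤ_[p]
  set Xtop : Submodule R (Fin m → R) :=
    Submodule.map (LinearMap.lsmul R (Fin m → R) PowerSeries.X) ⊤ with hXtop
  set Nζ : Submodule ℤ_[p] (Fin m → R) := Xtop.restrictScalars ℤ_[p] with hNζ
  set N : Submodule ℤ_[p] (Fin m → R) := (K ⊔ Xtop).restrictScalars ℤ_[p] with hN
  -- the `ℤ_p`-linear map taking constant coefficients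
  let e : (Fin m → R) →ₗ[ℤ_[p]] (Fin m → ℤ_[p]) :=
    LinearMap.pi (fun i => (PowerSeries.coeff (R := ℤ_[p]) 0).comp (LinearMap.proj i))
  have he : Function.Surjective e := by
    intro v
    refine ⟨fun i => PowerSeries.C (R := ℤ_[p]) (v i), ?_⟩
    funext i
    simp [e]
  have hker : LinearMap.ker e = Nζ := by
    ext a
    simp only [LinearMap.mem_ker, hNζ, Submodule.restrictScalars_mem, hXtop,
      Submodule.mem_map, Submodule.mem_top, true_and, LinearMap.lsmul_apply]
    constructor
    · intro h
      have hd : ∀ i, (PowerSeries.X : R) ∣ a i := by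
        intro i
        rw [PowerSeries.X_dvd_iff]
        have := congrFun h i
        simpa [e, PowerSeries.coeff_zero_eq_constantCoeff] using this
      refine ⟨fun i => (hd i).choose, ?_⟩
      funext i
      have := (hd i).choose_spec
      simp [Pi.smul_apply, smul_eq_mul, ← this]
    · rintro ⟨b, rfl⟩
      funext i
      simp [e]
  have hNζN : Nζ ≤ N := by
    intro x hx
    rw [hNζ, Submodule.restrictScalars_mem] at hx
    rw [hN, Submodule.restrictScalars_mem]
    exact Submodule.mem_sup_right hx
  -- iso `M ⧸ Nζ ≃ ℤ_p^m`
  let E : ((Fin m → R) ⧸ Nζ) ≃ₗ[ℤ_[p]] (Fin m → ℤ_[p]) :=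
    (Submodule.quotEquivOfEq Nζ (LinearMap.ker e) hker.symm).trans
      (e.quotKerEquivOfSurjective he)
  -- quotient map `M ⧸ Nζ → M ⧸ N`
  let q : ((Fin m → R) ⧸ Nζ) →ₗ[ℤ_[p]] ((Fin m → R) ⧸ N) :=
    Submodule.mapQ Nζ N LinearMap.id hNζN
  have hq : Function.Surjective q := by
    intro x
    obtain ⟨y, rfl⟩ := Submodule.mkQ_surjective N x
    exact ⟨Nζ.mkQ y, by simp [q, Submodule.mapQ_apply]⟩
  obtain ⟨F⟩ := h1
  let g : (Fin m → ℤ_[p]) →ₗ[ℤ_[p]] (Fin m → ℤ_[p]) :=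
    F.toLinearMap ∘ₗ q ∘ₗ E.symm.toLinearMap
  have hg : Function.Surjective g :=
    F.surjective.comp (hq.comp E.symm.surjective)
  have hg_inj : Function.Injective g :=
    OrzechProperty.injective_of_surjective_endomorphism g hg
  have hq_inj : Function.Injective q := by
    intro x y hxy
    have : g (E x) = g (E y) := by
      simp [g, LinearEquiv.symm_apply_apply, hxy]
    exact E.injective (hg_inj this)
  have hNle : N ≤ Nζ := by
    intro x hx
    have h0 : q (Nζ.mkQ x) = 0 := by
      simp only [q, Submodule.mapQ_apply, LinearMap.id_coe, id_eq]
      exact (Submodule.Quotient.mk_eq_zero N).mpr hx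
    have : Nζ.mkQ x = 0 := hq_inj (by simpa using h0)
    exact (Submodule.Quotient.mk_eq_zero Nζ).mp this
  have hKX : ∀ k ∈ K, ∃ b, (PowerSeries.X : R) • b = k := by
    intro k hk
    have hkN : k ∈ N := by
      rw [hN]
      exact Submodule.mem_sup_left hk
    have := hNle hkN
    rw [hNζ, Submodule.restrictScalars_mem, hXtop] at this
    obtain ⟨b, -, hb⟩ := this
    exact ⟨b, hb⟩
  -- now iterate
  rw [eq_bot_iff]
  intro k hk
  have key : ∀ n : ℕ, ∃ a ∈ K, k = (PowerSeries.X ^ n : R) • a := by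
    intro n
    induction n with
    | zero => exact ⟨k, hk, by simp⟩
    | succ n ih =>
      obtain ⟨a, ha, rfl⟩ := ih
      obtain ⟨b, hb⟩ := hKX a ha
      have hbK : b ∈ K := h2 b (hb ▸ ha)
      exact ⟨b, hbK, by rw [← hb, ← mul_smul, ← pow_succ]⟩
  simp only [Submodule.mem_bot]
  funext i
  apply PowerSeries.ext
  intro n
  obtain ⟨a, -, hka⟩ := key (n + 1)
  have hdvd : (PowerSeries.X : R) ^ (n + 1) ∣ k i := by
    refine ⟨a i, ?_⟩
    rw [hka]
    simp [Pi.smul_apply, smul_eq_mul]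
  simpa using PowerSeries.X_pow_dvd_iff.mp hdvd n (Nat.lt_succ_self n)
end

section
/- Let p be a prime, d ≥ 2, and R = ℤ_p[[X_1,…,X_d]]. For 1 ≤ i ≤ d−1 let 𝒳_i ⊆ ℬ_i(R), and assume the sequence (𝒳_1,…,𝒳_{d−1}) is rich, meaning: 𝒳_1 contains infinitely many pairwise non-associate elements (elements ζ, ζ′ with ζR ≠ ζ′R); and for each i with 1 < i ≤ d−1 and each fixed tuple (ζ_1,…,ζ_{i−1}) ∈ 𝒳_{i−1}, there are infinitely many distinct ideals of the form ζ_1R + ⋯ + ζ_{i−1}R + ζ_iR with (ζ_1,…,ζ_{i−1},ζ_i) ∈ 𝒳_i. Then for every i with 1 ≤ i ≤ d−1, the intersection over all (ζ_1,…,ζ_i) ∈ 𝒳_i of the ideals ζ_1R + ⋯ + ζ_iR equals 0. -/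
open MvPowerSeries
noncomputable section
variable {σ A : Type*} [CommRing A] [DecidableEq σ]

/-- Kill all monomials involving a variable from `s`. -/
def offVarsFun (s : Finset σ) (f : MvPowerSeries σ A) : MvPowerSeries σ A :=
  fun m => if ∀ j ∈ s, m j = 0 then MvPowerSeries.coeff m f else 0

lemma coeff_offVarsFun (s : Finset σ) (f : MvPowerSeries σ A) (m : σ →₀ ℕ) :
    MvPowerSeries.coeff m (offVarsFun s f) =
      if ∀ j ∈ s, m j = 0 then MvPowerSeries.coeff m f else 0 := rfl

def offVars (s : Finset σ) : MvPowerSeries σ A →+* MvPowerSeries σ A where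
  toFun := offVarsFun s
  map_one' := by
    ext m
    rw [coeff_offVarsFun]
    by_cases hm : m = 0
    · subst hm; simp
    · classical
      simp only [coeff_one, if_neg hm, ite_self]
  map_mul' f g := by
    ext m
    rw [coeff_offVarsFun, coeff_mul, coeff_mul]
    by_cases hC : ∀ j ∈ s, m j = 0
    · rw [if_pos hC]
      refine Finset.sum_congr rfl ?_
      rintro ⟨a, b⟩ hab
      rw [Finset.HasAntidiagonal.mem_antidiagonal] at hab
      simp only [coeff_offVarsFun]
      rw [if_pos, if_pos]
      · intro j hj
        have : a j + b j = m j := by rw [← Finsupp.add_apply, hab]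
        have := hC j hj; omega
      · intro j hj
        have : a j + b j = m j := by rw [← Finsupp.add_apply, hab]
        have := hC j hj; omega
    · rw [if_neg hC]
      symm
      refine Finset.sum_eq_zero ?_
      rintro ⟨a, b⟩ hab
      rw [Finset.HasAntidiagonal.mem_antidiagonal] at hab
      push_neg at hC
      obtain ⟨j, hjs, hjm⟩ := hC
      have hsum : a j + b j = m j := by rw [← Finsupp.add_apply, hab]
      simp only [coeff_offVarsFun]
      rcases Nat.eq_zero_or_pos (a j) with h | h
      · have hb : ¬ ∀ k ∈ s, b k = 0 := by
          intro H
          have hbj := H j hjs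
          exact hjm (by rw [← hsum, h, hbj])
        rw [if_neg hb, mul_zero]
      · have ha : ¬ ∀ k ∈ s, a k = 0 := by
          intro H
          have haj := H j hjs
          rw [haj] at h
          exact Nat.lt_irrefl 0 h
        rw [if_neg ha, zero_mul]
  map_zero' := by ext m; simp [coeff_offVarsFun]
  map_add' f g := by
    ext m
    simp only [coeff_offVarsFun, map_add]
    split_ifs <;> simp

lemma coeff_offVars (s : Finset σ) (f : MvPowerSeries σ A) (m : σ →₀ ℕ) :
    MvPowerSeries.coeff m (offVars s f) =
      if ∀ j ∈ s, m j = 0 then MvPowerSeries.coeff m f else 0 := rfl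

lemma offVars_offVars (s t : Finset σ) (f : MvPowerSeries σ A) :
    offVars s (offVars t f) = offVars (s ∪ t) f := by
  ext m
  simp only [coeff_offVars]
  have hiff : (∀ j ∈ s ∪ t, m j = 0) ↔ ((∀ j ∈ s, m j = 0) ∧ ∀ j ∈ t, m j = 0) := by
    constructor
    · intro h
      exact ⟨fun j hj => h j (Finset.mem_union_left _ hj),
        fun j hj => h j (Finset.mem_union_right _ hj)⟩
    · rintro ⟨h1, h2⟩ j hj
      rcases Finset.mem_union.mp hj with hj | hj
      · exact h1 j hj
      · exact h2 j hj
  simp only [hiff]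
  by_cases hs : ∀ j ∈ s, m j = 0
  · by_cases ht : ∀ j ∈ t, m j = 0
    · rw [if_pos hs, if_pos ht, if_pos ⟨hs, ht⟩]
    · rw [if_pos hs, if_neg ht, if_neg (fun h => ht h.2)]
  · rw [if_neg hs, if_neg (fun h => hs h.1)]

lemma offVars_X_of_mem (s : Finset σ) {j : σ} (hj : j ∈ s) :
    offVars s (X j : MvPowerSeries σ A) = 0 := by
  ext m
  simp only [coeff_offVars, map_zero]
  split_ifs with h
  · rw [MvPowerSeries.coeff_X, if_neg]
    intro hm
    have := h j hj
    rw [hm] at this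
    simp at this
  · rfl

lemma offVars_X_of_not_mem (s : Finset σ) {j : σ} (hj : j ∉ s) :
    offVars s (X j : MvPowerSeries σ A) = X j := by
  ext m
  simp only [coeff_offVars]
  split_ifs with h
  · rfl
  · symm
    rw [MvPowerSeries.coeff_X, if_neg]
    intro hm
    push_neg at h
    obtain ⟨k, hks, hmk⟩ := h
    rw [hm] at hmk
    have hkj : k ≠ j := fun e => hj (e ▸ hks)
    simp [Finsupp.single_apply, Ne.symm hkj] at hmk

lemma offVars_eq_zero_iff (s : Finset σ) (f : MvPowerSeries σ A) :
    offVars s f = 0 ↔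
      ∀ m : σ →₀ ℕ, (∀ j ∈ s, m j = 0) → MvPowerSeries.coeff m f = 0 := by
  constructor
  · intro h m hm
    have := congrArg (MvPowerSeries.coeff m) h
    rw [coeff_offVars, if_pos hm, map_zero] at this
    exact this
  · intro h
    ext m
    rw [coeff_offVars, map_zero]
    split_ifs with hm
    · exact h m hm
    · rfl

lemma ker_offVars (s : Finset σ) :
    RingHom.ker (offVars (A := A) s) =
      Ideal.span ((fun j => (X j : MvPowerSeries σ A)) '' ↑s) := by
  apply le_antisymm
  · induction s using Finset.induction_on with
    | empty =>
      intro f hf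
      rw [RingHom.mem_ker, offVars_eq_zero_iff] at hf
      have : f = 0 := by
        ext m
        rw [map_zero]
        exact hf m (by simp)
      rw [this]
      exact Ideal.zero_mem _
    | @insert j s hj ih =>
      intro f hf
      rw [RingHom.mem_ker] at hf
      set g := offVars {j} f with hg
      have h1 : (X j : MvPowerSeries σ A) ∣ f - g := by
        rw [MvPowerSeries.X_dvd_iff]
        intro m hm
        rw [map_sub, hg, coeff_offVars, if_pos (by simpa using hm), sub_self]
      have h2 : g ∈ RingHom.ker (offVars (A := A) s) := by
        rw [RingHom.mem_ker, hg, offVars_offVars,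
          show s ∪ {j} = insert j s by rw [Finset.union_comm, ← Finset.insert_eq]]
        exact hf
      have hXmem : (X j : MvPowerSeries σ A) ∈
          ((fun j => (X j : MvPowerSeries σ A)) '' ↑(insert j s)) :=
        ⟨j, by simp, rfl⟩
      have hsub : ((fun j => (X j : MvPowerSeries σ A)) '' ↑s) ⊆
          ((fun j => (X j : MvPowerSeries σ A)) '' ↑(insert j s)) :=
        Set.image_mono (by simp [Finset.subset_insert, Finset.coe_subset])
      have : f = (f - g) + g := by ring
      rw [this]
      refine Ideal.add_mem _ ?_ (Ideal.span_mono hsub (ih h2))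
      have := Ideal.mem_span_singleton.mpr h1
      exact Ideal.span_mono (Set.singleton_subset_iff.mpr hXmem) this
  · rw [Ideal.span_le]
    rintro x ⟨j, hj, rfl⟩
    rw [SetLike.mem_coe, RingHom.mem_ker]
    exact offVars_X_of_mem s (by simpa using hj)

instance mvPowerSeries_isDomain [IsDomain A] : IsDomain (MvPowerSeries σ A) :=
  NoZeroDivisors.to_isDomain _

lemma isPrime_span_X [IsDomain A] (s : Finset σ) :
    (Ideal.span ((fun j => (X j : MvPowerSeries σ A)) '' ↑s)).IsPrime := by
  rw [← ker_offVars]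
  exact RingHom.ker_isPrime _

lemma chain_lemma {p : ℕ} [hp : Fact p.Prime] {d : ℕ}
    (ρ c : ℕ → MvPowerSeries (Fin d) ℤ_[p])
    (hρ : ∀ n, ρ n ≠ 0) (hc : ∀ n, ¬ IsUnit (c n))
    (heq : ∀ n, ρ n = c n * ρ (n + 1)) : False := by
  have hc0 : ∀ n, c n ≠ 0 := fun n h => hρ n (by rw [heq n, h, zero_mul])
  choose D hD using fun n => MvPowerSeries.exists_finsupp_eq_lexOrder_of_ne_zero (hρ n)
  choose E hE using fun n => MvPowerSeries.exists_finsupp_eq_lexOrder_of_ne_zero (hc0 n)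
  have hDE : ∀ n, D n = E n + D (n + 1) := by
    intro n
    have h := MvPowerSeries.lexOrder_mul (c n) (ρ (n + 1))
    rw [← heq n, hD n, hE n, hD (n + 1), ← WithTop.coe_add, ← toLex_add,
      WithTop.coe_inj] at h
    exact toLex.injective h
  set deg : ℕ → ℕ := fun n => ∑ j, D n j with hdeg
  have hstep : ∀ n, deg n = (∑ j, E n j) + deg (n + 1) := by
    intro n
    simp only [hdeg]
    rw [← Finset.sum_add_distrib]
    exact Finset.sum_congr rfl fun j _ => by rw [hDE n, Finsupp.add_apply]
  have hanti : ∀ a b : ℕ, a ≤ b → deg b ≤ deg a :=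
    fun a b hab => antitone_nat_of_succ_le (fun n => by rw [hstep n]; omega) hab
  -- minimal value
  obtain ⟨n₀, hn₀⟩ : ∃ n₀, ∀ n, deg n₀ ≤ deg n := by
    obtain ⟨n₀, hn₀⟩ := Nat.sInf_mem (s := Set.range deg) ⟨deg 0, 0, rfl⟩
    exact ⟨n₀, fun n => hn₀ ▸ Nat.sInf_le ⟨n, rfl⟩⟩
  have hE0 : ∀ n, n₀ ≤ n → E n = 0 := by
    intro n hn
    have a1 := hanti n (n + 1) (Nat.le_succ n)
    have a2 := hn₀ (n + 1)
    have a3 := hanti n₀ n hn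
    have hsum0 : (∑ j, E n j) = 0 := by
      have := hstep n
      omega
    ext j
    have := (Finset.sum_eq_zero_iff.mp hsum0) j (Finset.mem_univ j)
    simpa using this
  have hDst : ∀ n, n₀ ≤ n → D n = D (n + 1) := by
    intro n hn
    rw [hDE n, hE0 n hn, zero_add]
  -- leading coefficients
  set t : ℕ → ℤ_[p] := fun n => MvPowerSeries.coeff (D n) (ρ n) with ht
  have ht0 : ∀ n, t n ≠ 0 := fun n =>
    MvPowerSeries.coeff_ne_zero_of_lexOrder (hD n).symm
  have htstep : ∀ n, n₀ ≤ n →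
      t n = MvPowerSeries.constantCoeff (c n) * t (n + 1) := by
    intro n hn
    have key := MvPowerSeries.coeff_mul_of_add_lexOrder (hE n) (hD (n + 1))
    rw [← heq n] at key
    have hEn := hE0 n hn
    rw [ht]
    simp only
    rw [show D n = E n + D (n + 1) from hDE n, key, hEn]
    rw [← MvPowerSeries.coeff_zero_eq_constantCoeff_apply]
  have hpdvd : ∀ n, n₀ ≤ n → (p : ℤ_[p]) ∣ MvPowerSeries.constantCoeff (c n) := by
    intro n hn
    rw [← PadicInt.norm_lt_one_iff_dvd]
    refine lt_of_le_of_ne (PadicInt.norm_le_one _) ?_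
    intro h1
    exact hc n (MvPowerSeries.isUnit_iff_constantCoeff.mpr (PadicInt.isUnit_iff.mpr h1))
  have hdvd : ∀ k n, n₀ ≤ n → (p : ℤ_[p]) ^ k ∣ t n := by
    intro k
    induction k with
    | zero => intro n _; simp
    | succ k ih =>
      intro n hn
      rw [htstep n hn, pow_succ, mul_comm ((p : ℤ_[p]) ^ k)]
      exact mul_dvd_mul (hpdvd n hn) (ih (n + 1) (by omega))
  -- contradiction via norms
  have hppos : (1 : ℝ) < (p : ℝ) := by
    exact_mod_cast hp.out.one_lt
  have hnormpos : 0 < ‖t n₀‖ := by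
    rw [norm_pos_iff]
    exact ht0 n₀
  obtain ⟨k, hk⟩ := exists_pow_lt_of_lt_one hnormpos (by
    rw [inv_lt_one_iff₀]; right; exact hppos : (p : ℝ)⁻¹ < 1)
  obtain ⟨u, hu⟩ := hdvd k n₀ le_rfl
  have : ‖t n₀‖ ≤ ((p : ℝ)⁻¹) ^ k := by
    rw [hu, norm_mul, norm_pow, PadicInt.norm_p]
    calc ((p : ℝ)⁻¹) ^ k * ‖u‖ ≤ ((p : ℝ)⁻¹) ^ k * 1 := by
          exact mul_le_mul_of_nonneg_left (PadicInt.norm_le_one u) (by positivity)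
      _ = ((p : ℝ)⁻¹) ^ k := mul_one _
  linarith

lemma main_lemma {p : ℕ} [hp : Fact p.Prime] {d : ℕ}
    (π' : MvPowerSeries (Fin d) ℤ_[p] →+* MvPowerSeries (Fin d) ℤ_[p])
    (hidem : ∀ x, π' (π' x) = π' x)
    (I' : Ideal (MvPowerSeries (Fin d) ℤ_[p])) (hker : RingHom.ker π' = I')
    (hI'p : I'.IsPrime)
    (𝒥 : Set (Ideal (MvPowerSeries (Fin d) ℤ_[p]))) (hinf : 𝒥.Infinite)
    (hJ : ∀ J ∈ 𝒥, J.IsPrime ∧ ∃ q, J = I' ⊔ Ideal.span {q})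
    (f : MvPowerSeries (Fin d) ℤ_[p]) (hf : ∀ J ∈ 𝒥, f ∈ J) : f ∈ I' := by
  haveI := hI'p
  haveI : IsDomain (MvPowerSeries (Fin d) ℤ_[p] ⧸ I') := Ideal.Quotient.isDomain I'
  by_contra hfI
  have hIle : ∀ J ∈ 𝒥, I' ≤ J := by
    intro J hJ'
    obtain ⟨-, q, rfl⟩ := hJ J hJ'
    exact le_sup_left
  have hinf' : (𝒥 \ {I'}).Infinite := hinf.diff (Set.finite_singleton I')
  set e := hinf'.natEmbedding with he
  set Jn : ℕ → Ideal (MvPowerSeries (Fin d) ℤ_[p]) := fun n => (e n : Ideal _) with hJn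
  have hJmem : ∀ n, Jn n ∈ 𝒥 := fun n => ((e n).2).1
  have hJne : ∀ n, Jn n ≠ I' := fun n => by
    have := ((e n).2).2
    simpa using this
  have hJinj : ∀ n m, Jn n = Jn m → n = m := fun n m h =>
    e.injective (Subtype.ext h)
  choose q hq using fun n => (hJ (Jn n) (hJmem n)).2
  haveI hJp : ∀ n, (Jn n).IsPrime := fun n => (hJ (Jn n) (hJmem n)).1
  set mk := Ideal.Quotient.mk I' with hmk
  set qb : ℕ → MvPowerSeries (Fin d) ℤ_[p] ⧸ I' := fun n => mk (q n) with hqb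
  have hspan : ∀ n, Ideal.span {qb n} = Ideal.map mk (Jn n) := by
    intro n
    rw [hq n, Ideal.map_sup, Ideal.map_quotient_self, bot_sup_eq, Ideal.map_span,
      Set.image_singleton]
  have hprimeIdeal : ∀ n, (Ideal.map mk (Jn n)).IsPrime := by
    intro n
    refine Ideal.map_isPrime_of_surjective Ideal.Quotient.mk_surjective ?_
    rw [Ideal.mk_ker]
    exact hIle (Jn n) (hJmem n)
  have hqb0 : ∀ n, qb n ≠ 0 := by
    intro n h0
    have hqI : q n ∈ I' := (Ideal.Quotient.eq_zero_iff_mem).mp h0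
    apply hJne n
    refine le_antisymm ?_ (hIle (Jn n) (hJmem n))
    rw [hq n]
    exact sup_le le_rfl ((Ideal.span_le).mpr (Set.singleton_subset_iff.mpr hqI))
  have hqprime : ∀ n, Prime (qb n) := fun n =>
    (Ideal.span_singleton_prime (hqb0 n)).mp (by rw [hspan n]; exact hprimeIdeal n)
  have hspan_inj : ∀ n m, Ideal.span {qb n} = Ideal.span {qb m} → n = m := by
    intro n m h
    rw [hspan n, hspan m] at h
    apply hJinj
    have hbot : Ideal.comap mk ⊥ = I' := by
      rw [← RingHom.ker_eq_comap_bot, hmk, Ideal.mk_ker]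
    have hcn := Ideal.comap_map_of_surjective mk Ideal.Quotient.mk_surjective (Jn n)
    have hcm := Ideal.comap_map_of_surjective mk Ideal.Quotient.mk_surjective (Jn m)
    rw [hbot, sup_eq_left.mpr (hIle (Jn n) (hJmem n))] at hcn
    rw [hbot, sup_eq_left.mpr (hIle (Jn m) (hJmem m))] at hcm
    rw [← hcn, ← hcm, h]
  have hnassoc : ∀ n m, qb n ∣ qb m → n = m := by
    intro n m h
    exact hspan_inj n m (Ideal.span_singleton_eq_span_singleton.mpr
      ((hqprime n).associated_of_dvd (hqprime m) h))
  set fb := mk f with hfb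
  have hfb0 : fb ≠ 0 := fun h => hfI ((Ideal.Quotient.eq_zero_iff_mem).mp h)
  have hdvd : ∀ n, qb n ∣ fb := by
    intro n
    rw [← Ideal.mem_span_singleton, hspan n]
    exact Ideal.mem_map_of_mem mk (hf (Jn n) (hJmem n))
  have hP : ∀ n, ∃ r, fb = (∏ k ∈ Finset.range n, qb k) * r := by
    intro n
    induction n with
    | zero => exact ⟨fb, by simp⟩
    | succ n ih =>
      obtain ⟨r, hr⟩ := ih
      have h1 : qb n ∣ r := by
        have h2 : qb n ∣ (∏ k ∈ Finset.range n, qb k) * r := hr ▸ hdvd n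
        have hnd : ¬ qb n ∣ ∏ k ∈ Finset.range n, qb k := by
          intro hdd
          obtain ⟨k, hk, hdk⟩ := (hqprime n).exists_mem_finset_dvd hdd
          rw [Finset.mem_range] at hk
          exact absurd (hnassoc n k hdk) (by omega)
        exact ((hqprime n).dvd_or_dvd h2).resolve_left hnd
      obtain ⟨r', hr'⟩ := h1
      exact ⟨r', by rw [Finset.prod_range_succ, hr, hr', mul_assoc]⟩
  choose r hr using hP
  have hrrel : ∀ n, r n = qb n * r (n + 1) := by
    intro n
    have hPne : (∏ k ∈ Finset.range n, qb k) ≠ 0 :=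
      Finset.prod_ne_zero_iff.mpr fun k _ => (hqprime k).ne_zero
    apply mul_left_cancel₀ hPne
    rw [← hr n, ← mul_assoc, ← Finset.prod_range_succ, ← hr (n + 1)]
  have hrne : ∀ n, r n ≠ 0 := by
    intro n h0
    exact hfb0 (by rw [hr n, h0, mul_zero])
  -- lift back to the power series ring
  have hI'ker : ∀ a ∈ I', π' a = 0 := by
    intro a ha
    rw [← hker] at ha
    exact ha
  set σl := Ideal.Quotient.lift I' π' hI'ker with hσl
  have hσinj : ∀ x, σl x = 0 → x = 0 := by
    intro x hx
    obtain ⟨a, rfl⟩ := Ideal.Quotient.mk_surjective x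
    rw [hσl, Ideal.Quotient.lift_mk] at hx
    have : a ∈ I' := by rw [← hker]; exact hx
    rwa [← Ideal.Quotient.eq_zero_iff_mem] at this
  set ρ : ℕ → MvPowerSeries (Fin d) ℤ_[p] := fun n => σl (r n) with hρdef
  set cc : ℕ → MvPowerSeries (Fin d) ℤ_[p] := fun n => σl (qb n) with hccdef
  have hρ0 : ∀ n, ρ n ≠ 0 := fun n h => hrne n (by
    by_contra h'
    exact h' (by
      apply hσinj
      exact h))
  have hrel : ∀ n, ρ n = cc n * ρ (n + 1) := by
    intro n
    rw [hρdef, hccdef]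
    simp only
    rw [hrrel n, map_mul]
  have hccnu : ∀ n, ¬ IsUnit (cc n) := by
    intro n hu
    have hcc : cc n = π' (q n) := by
      rw [hccdef]
      simp only [hqb]
      rw [hσl, Ideal.Quotient.lift_mk]
    have hmkcc : mk (π' (q n)) = qb n := by
      rw [hqb]
      simp only
      rw [hmk, Ideal.Quotient.mk_eq_mk_iff_sub_mem]
      rw [← hker, RingHom.mem_ker, map_sub, hidem, sub_self]
    apply (hqprime n).not_unit
    rw [← hmkcc]
    exact (hcc ▸ hu).map mk
  exact chain_lemma ρ cc hρ0 hccnu hrel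

section Base
variable {p : ℕ} [hp : Fact p.Prime] {d : ℕ}

lemma base_set_eq {i : ℕ} (hi : i ≤ d)
    (b : Fin d → MvPowerSeries (Fin d) ℤ_[p])
    (ψ : MvPowerSeries (Fin d) ℤ_[p] ≃ₐ[ℤ_[p]] MvPowerSeries (Fin d) ℤ_[p])
    (hψ : ∀ j : Fin d, ψ (MvPowerSeries.X j) = b j)
    (ζ : Fin i → MvPowerSeries (Fin d) ℤ_[p])
    (hb : ∀ j : Fin i, b (Fin.castLE hi j) = ζ j) :
    (⇑ψ '' ((fun j => (X j : MvPowerSeries (Fin d) ℤ_[p])) ''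
        ↑(Finset.univ.filter (fun j : Fin d => (j : ℕ) < i)))) = Set.range ζ := by
  ext x
  constructor
  · rintro ⟨y, ⟨j, hj, rfl⟩, rfl⟩
    rw [Finset.coe_filter, Set.mem_setOf_eq] at hj
    refine ⟨⟨(j : ℕ), hj.2⟩, ?_⟩
    rw [← hb ⟨(j : ℕ), hj.2⟩, hψ]
    congr 1
  · rintro ⟨j', rfl⟩
    refine ⟨X (Fin.castLE hi j'), ⟨Fin.castLE hi j', ?_, rfl⟩, ?_⟩
    · rw [Finset.coe_filter, Set.mem_setOf_eq]
      exact ⟨Finset.mem_univ _, j'.2⟩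
    · rw [hψ, hb]

lemma span_range_eq_map {i : ℕ} (hi : i ≤ d)
    (b : Fin d → MvPowerSeries (Fin d) ℤ_[p])
    (ψ : MvPowerSeries (Fin d) ℤ_[p] ≃ₐ[ℤ_[p]] MvPowerSeries (Fin d) ℤ_[p])
    (hψ : ∀ j : Fin d, ψ (MvPowerSeries.X j) = b j)
    (ζ : Fin i → MvPowerSeries (Fin d) ℤ_[p])
    (hb : ∀ j : Fin i, b (Fin.castLE hi j) = ζ j) :
    Ideal.span (Set.range ζ) =
      Ideal.map ψ.toRingEquiv
        (Ideal.span ((fun j => (X j : MvPowerSeries (Fin d) ℤ_[p])) ''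
          ↑(Finset.univ.filter (fun j : Fin d => (j : ℕ) < i)))) := by
  rw [Ideal.map_span, ← base_set_eq hi b ψ hψ ζ hb]
  simp only [AlgEquiv.toRingEquiv_eq_coe, RingEquiv.toRingHom_eq_coe, RingHom.coe_coe,
    AlgEquiv.coe_ringEquiv]

lemma span_range_isPrime {i : ℕ} (hi : i ≤ d)
    (b : Fin d → MvPowerSeries (Fin d) ℤ_[p])
    (ψ : MvPowerSeries (Fin d) ℤ_[p] ≃ₐ[ℤ_[p]] MvPowerSeries (Fin d) ℤ_[p])
    (hψ : ∀ j : Fin d, ψ (MvPowerSeries.X j) = b j)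
    (ζ : Fin i → MvPowerSeries (Fin d) ℤ_[p])
    (hb : ∀ j : Fin i, b (Fin.castLE hi j) = ζ j) :
    (Ideal.span (Set.range ζ)).IsPrime := by
  rw [span_range_eq_map hi b ψ hψ ζ hb]
  haveI := isPrime_span_X (A := ℤ_[p])
    (Finset.univ.filter (fun j : Fin d => (j : ℕ) < i))
  exact Ideal.map_isPrime_of_equiv _

end Base

section Conj
variable {p : ℕ} [hp : Fact p.Prime] {d : ℕ}

lemma conj_idem (E : MvPowerSeries (Fin d) ℤ_[p] ≃+* MvPowerSeries (Fin d) ℤ_[p])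
    (s : Finset (Fin d)) (x : MvPowerSeries (Fin d) ℤ_[p]) :
    (E.toRingHom.comp ((offVars s).comp E.symm.toRingHom))
      ((E.toRingHom.comp ((offVars s).comp E.symm.toRingHom)) x) =
      (E.toRingHom.comp ((offVars s).comp E.symm.toRingHom)) x := by
  simp only [RingHom.comp_apply, RingEquiv.toRingHom_eq_coe, RingEquiv.coe_toRingHom,
    RingEquiv.symm_apply_apply]
  rw [offVars_offVars, Finset.union_self]

lemma ker_conj {i : ℕ} (hi : i ≤ d)
    (b : Fin d → MvPowerSeries (Fin d) ℤ_[p])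
    (ψ : MvPowerSeries (Fin d) ℤ_[p] ≃ₐ[ℤ_[p]] MvPowerSeries (Fin d) ℤ_[p])
    (hψ : ∀ j : Fin d, ψ (MvPowerSeries.X j) = b j)
    (ζ : Fin i → MvPowerSeries (Fin d) ℤ_[p])
    (hb : ∀ j : Fin i, b (Fin.castLE hi j) = ζ j) :
    RingHom.ker (ψ.toRingEquiv.toRingHom.comp
      ((offVars (Finset.univ.filter (fun j : Fin d => (j : ℕ) < i))).comp
        ψ.toRingEquiv.symm.toRingHom)) = Ideal.span (Set.range ζ) := by
  ext x
  rw [RingHom.mem_ker, RingHom.comp_apply, RingHom.comp_apply,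
    span_range_eq_map hi b ψ hψ ζ hb, ← Ideal.symm_apply_mem_of_equiv_iff,
    ← ker_offVars, RingHom.mem_ker]
  simp only [RingEquiv.toRingHom_eq_coe, RingEquiv.coe_toRingHom,
    EmbeddingLike.map_eq_zero_iff]

end Conj

/-- A tuple `(ζ_1,…,ζ_d)` is a *base* for `R = ℤ_p[[X_1,…,X_d]]` if some
`ℤ_p`-algebra automorphism of `R` maps `X_j` to `ζ_j` for each `j`. -/
def IsBase (p : ℕ) [Fact p.Prime] (d : ℕ)
    (ζ : Fin d → MvPowerSeries (Fin d) ℤ_[p]) : Prop :=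
  ∃ f : MvPowerSeries (Fin d) ℤ_[p] ≃ₐ[ℤ_[p]] MvPowerSeries (Fin d) ℤ_[p],
    ∀ j : Fin d, f (MvPowerSeries.X j) = ζ j

/-- Lemma on rich sequences: if `(𝒳_1,…,𝒳_{d−1})` is a rich sequence of sets of
partial bases of `R = ℤ_p[[X_1,…,X_d]]` (`d ≥ 2`), then for `1 ≤ i ≤ d−1` the
intersection over `(ζ_1,…,ζ_i) ∈ 𝒳_i` of the ideals `ζ_1R + ⋯ + ζ_iR` is zero.
Richness: `𝒳_1` contains infinitely many pairwise non-associate elements, and for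
`1 < i ≤ d−1` and each fixed `(ζ_1,…,ζ_{i−1}) ∈ 𝒳_{i−1}` there are infinitely many
distinct ideals `ζ_1R + ⋯ + ζ_iR` with `(ζ_1,…,ζ_i) ∈ 𝒳_i`. -/
theorem rich_sequence_iInf_eq_bot (p : ℕ) [Fact p.Prime] (d : ℕ) (hd : 2 ≤ d)
    (𝒳 : (i : ℕ) → Set (Fin i → MvPowerSeries (Fin d) ℤ_[p]))
    (hsub : ∀ (i : ℕ) (h1 : 1 ≤ i) (h2 : i ≤ d - 1), ∀ ζ ∈ 𝒳 i,
      ∃ b : Fin d → MvPowerSeries (Fin d) ℤ_[p], IsBase p d b ∧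
        ∀ j : Fin i, b (Fin.castLE (h2.trans (Nat.sub_le d 1)) j) = ζ j)
    (hrich1 : Set.Infinite {I : Ideal (MvPowerSeries (Fin d) ℤ_[p]) |
      ∃ ζ ∈ 𝒳 1, I = Ideal.span {ζ 0}})
    (hrich2 : ∀ i : ℕ, 1 ≤ i → i + 1 ≤ d - 1 → ∀ ζ' ∈ 𝒳 i,
      Set.Infinite {I : Ideal (MvPowerSeries (Fin d) ℤ_[p]) |
        ∃ ζ ∈ 𝒳 (i + 1), (∀ j : Fin i, ζ (Fin.castSucc j) = ζ' j) ∧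
          I = Ideal.span (Set.range ζ)}) :
    ∀ i : ℕ, 1 ≤ i → i ≤ d - 1 →
      (⨅ ζ ∈ 𝒳 i, Ideal.span (Set.range ζ)) = ⊥ := by
  have hd1 : 1 ≤ d - 1 := by omega
  intro i hi1
  induction i, hi1 using Nat.le_induction with
  | base =>
    intro _
    rw [eq_bot_iff]
    intro f hf
    have hf' : ∀ ζ ∈ 𝒳 1, f ∈ Ideal.span (Set.range ζ) := by
      intro ζ hζ
      have h1 := hf
      rw [Submodule.mem_iInf] at h1
      have h2 := h1 ζ
      rw [Submodule.mem_iInf] at h2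
      exact h2 hζ
    rw [Submodule.mem_bot]
    have hrange : ∀ ζ : Fin 1 → MvPowerSeries (Fin d) ℤ_[p],
        Set.range ζ = {ζ 0} := by
      intro ζ
      ext x
      constructor
      · rintro ⟨j, rfl⟩
        rw [Subsingleton.elim j 0]
        rfl
      · rintro rfl
        exact ⟨0, rfl⟩
    have hkerid : RingHom.ker (RingHom.id (MvPowerSeries (Fin d) ℤ_[p])) = ⊥ := by
      ext x
      simp [RingHom.mem_ker]
    have h0 : f ∈ (⊥ : Ideal (MvPowerSeries (Fin d) ℤ_[p])) := by
      refine main_lemma (RingHom.id _) (fun x => rfl) ⊥ hkerid Ideal.bot_prime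
        {I : Ideal (MvPowerSeries (Fin d) ℤ_[p]) | ∃ ζ ∈ 𝒳 1, I = Ideal.span {ζ 0}}
        hrich1 ?_ f ?_
      · rintro J ⟨ζ, hζ, rfl⟩
        obtain ⟨b, ⟨ψ, hψ⟩, hb⟩ := hsub 1 le_rfl hd1 ζ hζ
        constructor
        · have := span_range_isPrime (hd1.trans (Nat.sub_le d 1)) b ψ hψ ζ hb
          rwa [hrange ζ] at this
        · exact ⟨ζ 0, by rw [bot_sup_eq]⟩
      · rintro J ⟨ζ, hζ, rfl⟩
        rw [← hrange ζ]
        exact hf' ζ hζ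
    simpa using h0
  | succ i hi1 IH =>
    intro hle
    have hile : i ≤ d - 1 := by omega
    have IH' := IH hile
    rw [eq_bot_iff]
    intro f hf
    have hf' : ∀ ζ ∈ 𝒳 (i + 1), f ∈ Ideal.span (Set.range ζ) := by
      intro ζ hζ
      have h1 := hf
      rw [Submodule.mem_iInf] at h1
      have h2 := h1 ζ
      rw [Submodule.mem_iInf] at h2
      exact h2 hζ
    rw [Submodule.mem_bot]
    have key : ∀ ζ' ∈ 𝒳 i, f ∈ Ideal.span (Set.range ζ') := by
      intro ζ' hζ'
      obtain ⟨b, ⟨ψ, hψ⟩, hb⟩ := hsub i hi1 hile ζ' hζ'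
      refine main_lemma
        (ψ.toRingEquiv.toRingHom.comp
          ((offVars (Finset.univ.filter (fun j : Fin d => (j : ℕ) < i))).comp
            ψ.toRingEquiv.symm.toRingHom))
        (conj_idem ψ.toRingEquiv _)
        (Ideal.span (Set.range ζ'))
        (ker_conj (hile.trans (Nat.sub_le d 1)) b ψ hψ ζ' hb)
        (span_range_isPrime (hile.trans (Nat.sub_le d 1)) b ψ hψ ζ' hb)
        _ (hrich2 i hi1 hle ζ' hζ') ?_ f ?_
      · rintro J ⟨ζ, hζ, hext, rfl⟩
        constructor
        · obtain ⟨b₂, ⟨ψ₂, hψ₂⟩, hb₂⟩ := hsub (i + 1) (by omega) hle ζ hζ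
          exact span_range_isPrime (hle.trans (Nat.sub_le d 1)) b₂ ψ₂ hψ₂ ζ hb₂
        · refine ⟨ζ (Fin.last i), ?_⟩
          have hdecomp : Set.range ζ = Set.range ζ' ∪ {ζ (Fin.last i)} := by
            ext x
            constructor
            · rintro ⟨j, rfl⟩
              rcases Fin.eq_castSucc_or_eq_last j with ⟨j', rfl⟩ | rfl
              · exact Or.inl ⟨j', (hext j').symm⟩
              · exact Or.inr rfl
            · rintro (⟨j', rfl⟩ | h)
              · exact ⟨Fin.castSucc j', hext j'⟩
              · rw [Set.mem_singleton_iff] at h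
                exact ⟨Fin.last i, h.symm⟩
          rw [hdecomp, Ideal.span_union]
      · rintro J ⟨ζ, hζ, hext, rfl⟩
        exact hf' ζ hζ
    have hfin : f ∈ (⨅ ζ' ∈ 𝒳 i, Ideal.span (Set.range ζ')) := by
      rw [Submodule.mem_iInf]
      intro ζ'
      rw [Submodule.mem_iInf]
      intro hζ'
      exact key ζ' hζ'
    rw [IH'] at hfin
    simpa using hfin

end
end

section
/- Let p be a prime, d ≥ 2, and R = ℤ_p[[X_1,…,X_d]]. Then the intersection, taken over all bases (ζ_1,…,ζ_d) for R, of the ideals ζ_1R + ⋯ + ζ_{d−1}R equals 0. -/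
open MvPowerSeries Finsupp

namespace Subst

variable {d : ℕ} {A : Type*} [CommRing A]

/-- total degree of an exponent -/
def deg (e : Fin d →₀ ℕ) : ℕ := ∑ i, e i

lemma deg_add (u v : Fin d →₀ ℕ) : deg (u + v) = deg u + deg v := by
  simp [deg, Finset.sum_add_distrib]

lemma apply_le_deg (e : Fin d →₀ ℕ) (i : Fin d) : e i ≤ deg e :=
  Finset.single_le_sum (fun _ _ => Nat.zero_le _) (Finset.mem_univ i)

lemma deg_single (s : Fin d) (n : ℕ) : deg (single s n) = n := by
  classical
  simp [deg, single_apply]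

/-- homogeneity of degree m for a multivariate power series -/
def Homog (m : ℕ) (F : MvPowerSeries (Fin d) A) : Prop :=
  ∀ b, deg b ≠ m → coeff b F = 0

lemma homog_one : Homog 0 (1 : MvPowerSeries (Fin d) A) := by
  classical
  intro b hb
  rw [coeff_one, if_neg]
  rintro rfl; exact hb (by simp [deg])

lemma homog_X (s : Fin d) : Homog 1 (X s : MvPowerSeries (Fin d) A) := by
  classical
  intro b hb
  rw [coeff_X, if_neg]
  rintro rfl; exact hb (deg_single s 1)

lemma homog_mul {m n : ℕ} {F G : MvPowerSeries (Fin d) A}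
    (hF : Homog m F) (hG : Homog n G) : Homog (m + n) (F * G) := by
  classical
  intro b hb
  rw [coeff_mul]
  refine Finset.sum_eq_zero fun p hp => ?_
  rw [Finset.HasAntidiagonal.mem_antidiagonal] at hp
  by_cases h1 : deg p.1 = m
  · have h2 : deg p.2 ≠ n := by
      intro h2; apply hb; rw [← hp, deg_add, h1, h2]
    rw [hG _ h2, mul_zero]
  · rw [hF _ h1, zero_mul]

lemma homog_pow {F : MvPowerSeries (Fin d) A} (hF : Homog 1 F) (n : ℕ) :
    Homog n (F ^ n) := by
  induction n with
  | zero => simpa using homog_one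
  | succ k ih => rw [pow_succ]; simpa using homog_mul ih hF

lemma homog_add {m : ℕ} {F G : MvPowerSeries (Fin d) A}
    (hF : Homog m F) (hG : Homog m G) : Homog m (F + G) := by
  intro b hb; rw [map_add, hF b hb, hG b hb, add_zero]

lemma homog_C_mul {m : ℕ} (r : A) {F : MvPowerSeries (Fin d) A}
    (hF : Homog m F) : Homog m (C r * F) := by
  intro b hb; rw [coeff_C_mul, hF b hb, mul_zero]

lemma homog_prod_pow {ζ : Fin d → MvPowerSeries (Fin d) A}
    (hζ : ∀ s, Homog 1 (ζ s)) (e : Fin d →₀ ℕ) :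
    Homog (deg e) (∏ s, ζ s ^ e s) := by
  classical
  have : ∀ (t : Finset (Fin d)), Homog (∑ s ∈ t, e s) (∏ s ∈ t, ζ s ^ e s) := by
    intro t
    induction t using Finset.cons_induction with
    | empty => simpa using homog_one
    | cons a t ha ih =>
        rw [Finset.prod_cons, Finset.sum_cons]
        exact homog_mul (homog_pow (hζ a) (e a)) ih
  exact this Finset.univ


variable (A) in
/-- the constant exponent -/
noncomputable def cst (n : ℕ) : Fin d →₀ ℕ := Finsupp.equivFunOnFinite.symm (fun _ => n)

@[simp] lemma cst_apply (n : ℕ) (i : Fin d) : cst (d := d) n i = n := rfl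

lemma le_cst_of_deg_le {e : Fin d →₀ ℕ} {n : ℕ} (h : deg e ≤ n) : e ≤ cst n := by
  intro i
  exact le_trans (apply_le_deg e i) (by simpa using h)

section Phi

variable (ζ : Fin d → MvPowerSeries (Fin d) A)

/-- coefficient of the substituted monomial -/
noncomputable def cmon (e b : Fin d →₀ ℕ) : A := coeff b (∏ s, ζ s ^ e s)

variable {ζ} (hζ : ∀ s, Homog 1 (ζ s))

include hζ in
lemma cmon_eq_zero {e b : Fin d →₀ ℕ} (h : deg e ≠ deg b) : cmon ζ e b = 0 :=
  homog_prod_pow hζ e b (Ne.symm h)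

variable (ζ) in
/-- the substitution map, coefficientwise -/
noncomputable def PhiFun (g : MvPowerSeries (Fin d) A) : MvPowerSeries (Fin d) A :=
  fun b => ∑ e ∈ Finset.Iic (cst (deg b)), coeff e g * cmon ζ e b

lemma coeff_PhiFun (g : MvPowerSeries (Fin d) A) (b : Fin d →₀ ℕ) :
    coeff b (PhiFun ζ g) = ∑ e ∈ Finset.Iic (cst (deg b)), coeff e g * cmon ζ e b := rfl

include hζ in
lemma phi_stable (g : MvPowerSeries (Fin d) A) (b : Fin d →₀ ℕ) (S : Finset (Fin d →₀ ℕ))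
    (hS : ∀ e, deg e = deg b → e ∈ S) :
    ∑ e ∈ S, coeff e g * cmon ζ e b = coeff b (PhiFun ζ g) := by
  rw [coeff_PhiFun]
  have key : ∀ (T : Finset (Fin d →₀ ℕ)), T ⊆ S ∪ Finset.Iic (cst (deg b)) →
      (∀ e, deg e = deg b → e ∈ T) →
      ∑ e ∈ T, coeff e g * cmon ζ e b
        = ∑ e ∈ S ∪ Finset.Iic (cst (deg b)), coeff e g * cmon ζ e b := by
    intro T hsub hT
    refine Finset.sum_subset hsub ?_
    intro e _ he
    have hne : deg e ≠ deg b := fun h => he (hT e h)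
    rw [cmon_eq_zero hζ hne, mul_zero]
  rw [key S Finset.subset_union_left hS, key (Finset.Iic (cst (deg b)))
    Finset.subset_union_right
    (fun e he => Finset.mem_Iic.mpr (le_cst_of_deg_le (le_of_eq he)))]


include hζ in
lemma PhiFun_one : PhiFun ζ (1 : MvPowerSeries (Fin d) A) = 1 := by
  classical
  ext b
  rw [coeff_PhiFun]
  simp only [coeff_one, ite_mul, one_mul, zero_mul]
  rw [Finset.sum_ite_eq' (Finset.Iic (cst (deg b))) 0 (fun e => cmon ζ e b),
    if_pos (Finset.mem_Iic.mpr zero_le)]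
  simp [cmon, coeff_one]

include hζ in
lemma PhiFun_mul (g h : MvPowerSeries (Fin d) A) :
    PhiFun ζ (g * h) = PhiFun ζ g * PhiFun ζ h := by
  classical
  ext b
  set B := Finset.Iic (cst (d := d) (deg b)) with hB
  have hstep1 : coeff b (PhiFun ζ (g * h))
      = ∑ q ∈ B ×ˢ B, coeff q.1 g * coeff q.2 h * cmon ζ (q.1 + q.2) b := by
    rw [coeff_PhiFun]
    simp only [coeff_mul, Finset.sum_mul]
    rw [Finset.sum_sigma']
    rw [Finset.sum_bij' (i := fun (x : Σ _e : Fin d →₀ ℕ, (Fin d →₀ ℕ) × (Fin d →₀ ℕ)) _ => x.2)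
      (j := fun (q : (Fin d →₀ ℕ) × (Fin d →₀ ℕ)) _ =>
        (⟨q.1 + q.2, q⟩ : Σ _e : Fin d →₀ ℕ, (Fin d →₀ ℕ) × (Fin d →₀ ℕ)))
      (t := (B ×ˢ B).filter (fun q => q.1 + q.2 ≤ cst (deg b)))
      (g := fun q => coeff q.1 g * coeff q.2 h * cmon ζ (q.1 + q.2) b)]
    · exact (Finset.sum_subset (Finset.filter_subset _ _) (by
        intro q _ hq
        rw [Finset.mem_filter] at hq
        push_neg at hq
        by_cases hc : deg (q.1 + q.2) = deg b
        · exact absurd (le_cst_of_deg_le (le_of_eq hc)) fun hle => by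
            simp [Finset.mem_product] at hq
            exact (hq (by
              rcases Finset.mem_product.mp ‹q ∈ B ×ˢ B› with ⟨h1, h2⟩
              exact h1) (by
              rcases Finset.mem_product.mp ‹q ∈ B ×ˢ B› with ⟨h1, h2⟩
              exact h2)) hle
        · rw [cmon_eq_zero hζ hc, mul_zero]))
    · rintro ⟨e, p⟩ hx
      rw [Finset.mem_sigma] at hx
      obtain ⟨he, hp⟩ := hx
      rw [Finset.HasAntidiagonal.mem_antidiagonal] at hp
      rw [Finset.mem_filter, Finset.mem_product]
      have hle : p.1 + p.2 ≤ cst (deg b) := by rw [hp]; exact Finset.mem_Iic.mp he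
      refine ⟨⟨Finset.mem_Iic.mpr ?_, Finset.mem_Iic.mpr ?_⟩, hle⟩
      · exact le_trans (le_add_right le_rfl) hle
      · exact le_trans (le_add_left le_rfl) hle
    · intro q hq
      rw [Finset.mem_filter] at hq
      rw [Finset.mem_sigma]
      exact ⟨Finset.mem_Iic.mpr hq.2, Finset.HasAntidiagonal.mem_antidiagonal.mpr rfl⟩
    · rintro ⟨e, p⟩ hx
      rw [Finset.mem_sigma] at hx
      obtain ⟨he, hp⟩ := hx
      rw [Finset.HasAntidiagonal.mem_antidiagonal] at hp
      simp [hp]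
    · intro q hq; rfl
    · rintro ⟨e, p⟩ hx
      rw [Finset.mem_sigma] at hx
      obtain ⟨he, hp⟩ := hx
      rw [Finset.HasAntidiagonal.mem_antidiagonal] at hp
      rw [mul_assoc, hp]
      ring
  have hcm : ∀ u v : Fin d →₀ ℕ,
      cmon ζ (u + v) b = ∑ p ∈ Finset.HasAntidiagonal.antidiagonal b, cmon ζ u p.1 * cmon ζ v p.2 := by
    intro u v
    have : (∏ s, ζ s ^ (u + v) s) = (∏ s, ζ s ^ u s) * ∏ s, ζ s ^ v s := by
      rw [← Finset.prod_mul_distrib]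
      refine Finset.prod_congr rfl fun s _ => ?_
      rw [Finsupp.add_apply, pow_add]
    rw [cmon, this, coeff_mul]
    rfl
  rw [hstep1, coeff_mul]
  simp only [hcm, Finset.mul_sum]
  rw [Finset.sum_comm]
  refine Finset.sum_congr rfl fun p hp => ?_
  rw [Finset.HasAntidiagonal.mem_antidiagonal] at hp
  have h1 : deg p.1 ≤ deg b := by rw [← hp, deg_add]; omega
  have h2 : deg p.2 ≤ deg b := by rw [← hp, deg_add]; omega
  rw [← phi_stable hζ g p.1 B (fun e he => Finset.mem_Iic.mpr (le_cst_of_deg_le (he ▸ h1))),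
    ← phi_stable hζ h p.2 B (fun e he => Finset.mem_Iic.mpr (le_cst_of_deg_le (he ▸ h2))),
    Finset.sum_mul_sum, Finset.sum_product]
  refine Finset.sum_congr rfl fun u _ => ?_
  refine Finset.sum_congr rfl fun v _ => ?_
  ring


omit hζ in
lemma PhiFun_add (g h : MvPowerSeries (Fin d) A) :
    PhiFun ζ (g + h) = PhiFun ζ g + PhiFun ζ h := by
  ext b
  simp only [map_add, coeff_PhiFun, add_mul, Finset.sum_add_distrib]

variable (ζ) in
/-- the substitution ring homomorphism -/
noncomputable def Phi (hζ : ∀ s, Homog 1 (ζ s)) :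
    MvPowerSeries (Fin d) A →+* MvPowerSeries (Fin d) A where
  toFun := PhiFun ζ
  map_one' := PhiFun_one hζ
  map_mul' := PhiFun_mul hζ
  map_zero' := by
    ext b; simp [coeff_PhiFun]
  map_add' := PhiFun_add

lemma coeff_Phi (g : MvPowerSeries (Fin d) A) (b : Fin d →₀ ℕ) :
    coeff b (Phi ζ hζ g) = ∑ e ∈ Finset.Iic (cst (deg b)), coeff e g * cmon ζ e b := rfl

include hζ in
lemma Phi_C (r : A) : Phi ζ hζ (C r) = C r := by
  classical
  ext b
  rw [coeff_Phi]
  simp only [coeff_C, ite_mul, zero_mul]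
  rw [Finset.sum_ite_eq' (Finset.Iic (cst (deg b))) 0 (fun e => r * cmon ζ e b),
    if_pos (Finset.mem_Iic.mpr zero_le)]
  simp [cmon, coeff_C, coeff_one, mul_ite]

include hζ in
lemma Phi_X (s : Fin d) : Phi ζ hζ (X s) = ζ s := by
  classical
  ext b
  have hmem : ∀ e : Fin d →₀ ℕ, deg e = deg b →
      e ∈ insert (single s 1) (Finset.Iic (cst (deg b))) :=
    fun e he => Finset.mem_insert_of_mem (Finset.mem_Iic.mpr (le_cst_of_deg_le (le_of_eq he)))
  rw [show coeff b (Phi ζ hζ (X s)) = coeff b (PhiFun ζ (X s)) from rfl,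
    ← phi_stable hζ (X s) b _ hmem]
  simp only [coeff_X, ite_mul, one_mul, zero_mul]
  rw [Finset.sum_ite_eq' _ (single s 1) (fun e => cmon ζ e b),
    if_pos (Finset.mem_insert_self _ _)]
  have : (∏ t, ζ t ^ (single s 1) t) = ζ s := by
    rw [Finset.prod_eq_single s (fun t _ ht => by simp [single_apply, ht.symm]) (by simp)]
    simp
  rw [cmon, this]

/-- product of variables raised to exponents is a monomial -/
lemma prod_X_pow (u : Fin d →₀ ℕ) :
    (∏ s, (X s : MvPowerSeries (Fin d) A) ^ u s) = monomial u 1 := by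
  classical
  have h1 : ∀ s : Fin d, (X s : MvPowerSeries (Fin d) A) ^ u s
      = monomial (single s (u s)) 1 := fun s => X_pow_eq s (u s)
  simp only [h1]
  have : ∀ (t : Finset (Fin d)),
      (∏ s ∈ t, (monomial (single s (u s)) 1 : MvPowerSeries (Fin d) A))
        = monomial (∑ s ∈ t, single s (u s)) 1 := by
    intro t
    induction t using Finset.cons_induction with
    | empty => simp
    | cons a t ha ih => rw [Finset.prod_cons, Finset.sum_cons, ih, monomial_mul_monomial, one_mul]
  rw [this, Finsupp.univ_sum_single]

end Phi

section Elementary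

variable (L : Fin d)

variable (A) in
/-- the linear family of substituted variables -/
noncomputable def zeta (t : Fin d → A) : Fin d → MvPowerSeries (Fin d) A :=
  fun s => X s + C (t s) * X L

lemma homog_zeta (t : Fin d → A) : ∀ s, Homog 1 (zeta A L t s) :=
  fun s => homog_add (homog_X s) (homog_C_mul _ (homog_X L))

lemma zeta_L (t : Fin d → A) (ht : t L = 0) : zeta A L t L = X L := by
  simp [zeta, ht]

lemma Phi_zeta_pair (t₁ t₂ : Fin d → A) (h1 : t₁ L = 0) (hsum : ∀ s, t₁ s + t₂ s = 0)
    (s : Fin d) :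
    Phi (zeta A L t₁) (homog_zeta L t₁) (zeta A L t₂ s) = X s := by
  rw [zeta]
  rw [map_add, map_mul, Phi_C (homog_zeta L t₁), Phi_X (homog_zeta L t₁),
    Phi_X (homog_zeta L t₁), zeta_L L t₁ h1, zeta]
  have : C (t₁ s) * X L + C (t₂ s) * X L = 0 := by
    rw [← add_mul, ← map_add, hsum s, map_zero, zero_mul]
  rw [add_assoc, this, add_zero]

lemma Phi_comp (t₁ t₂ : Fin d → A) (h1 : t₁ L = 0) (hsum : ∀ s, t₁ s + t₂ s = 0)
    (g : MvPowerSeries (Fin d) A) :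
    Phi (zeta A L t₁) (homog_zeta L t₁) (Phi (zeta A L t₂) (homog_zeta L t₂) g) = g := by
  classical
  set ζ₁ := zeta A L t₁
  set ζ₂ := zeta A L t₂
  have hζ₁ := homog_zeta L t₁
  have hζ₂ := homog_zeta L t₂
  ext b
  rw [coeff_Phi]
  set B := Finset.Iic (cst (d := d) (deg b)) with hBdef
  have hterm : ∀ e ∈ B, coeff e (Phi ζ₂ hζ₂ g) * cmon ζ₁ e b
      = (∑ u ∈ B, coeff u g * cmon ζ₂ u e) * cmon ζ₁ e b := by
    intro e _
    by_cases hc : cmon ζ₁ e b = 0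
    · rw [hc, mul_zero, mul_zero]
    · have hdeg : deg e = deg b := by
        by_contra hne; exact hc (cmon_eq_zero hζ₁ hne)
      congr 1
      exact (phi_stable hζ₂ g e B
        (fun u hu => Finset.mem_Iic.mpr (le_cst_of_deg_le (by rw [hu, hdeg])))).symm
  rw [Finset.sum_congr rfl hterm]
  simp only [Finset.sum_mul, mul_assoc]
  rw [Finset.sum_comm]
  simp only [← Finset.mul_sum]
  have hinner : ∀ u : Fin d →₀ ℕ,
      (∑ e ∈ B, cmon ζ₂ u e * cmon ζ₁ e b) = coeff b (monomial u 1) := by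
    intro u
    have h1' : (∑ e ∈ B, cmon ζ₂ u e * cmon ζ₁ e b)
        = coeff b (Phi ζ₁ hζ₁ (∏ s, ζ₂ s ^ u s)) := by
      rw [coeff_Phi]; rfl
    rw [h1', map_prod]
    simp only [map_pow]
    have : ∀ s, Phi ζ₁ hζ₁ (ζ₂ s) = X s := Phi_zeta_pair L t₁ t₂ h1 hsum
    simp only [this]
    rw [prod_X_pow]
  simp only [hinner]
  simp only [coeff_monomial, mul_ite, mul_one, mul_zero]
  rw [Finset.sum_ite_eq B b (fun u => coeff u g),
    if_pos (Finset.mem_Iic.mpr (le_cst_of_deg_le le_rfl))]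

variable (A) in
/-- the elementary substitution algebra automorphism -/
noncomputable def substEquiv (t : Fin d → A) (ht : t L = 0) :
    MvPowerSeries (Fin d) A ≃ₐ[A] MvPowerSeries (Fin d) A where
  toFun := Phi (zeta A L t) (homog_zeta L t)
  invFun := Phi (zeta A L (-t)) (homog_zeta L (-t))
  left_inv := fun g => Phi_comp L (-t) t (by simp [ht]) (fun s => by simp) g
  right_inv := fun g => Phi_comp L t (-t) ht (fun s => by simp) g
  map_mul' := map_mul _
  map_add' := map_add _
  commutes' := fun r => by
    rw [MvPowerSeries.algebraMap_apply, Algebra.algebraMap_self_apply]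
    exact Phi_C (homog_zeta L t) r

lemma substEquiv_X (t : Fin d → A) (ht : t L = 0) (s : Fin d) :
    substEquiv A L t ht (X s) = zeta A L t s :=
  Phi_X (homog_zeta L t) s

end Elementary

section Main

variable {d : ℕ} {A : Type*} [CommRing A]

/-- exponents of total degree `m` -/
noncomputable def degSet (d m : ℕ) : Finset (Fin d →₀ ℕ) :=
  (Finset.Iic (cst (d := d) m)).filter (fun e => deg e = m)

lemma mem_degSet {m : ℕ} {e : Fin d →₀ ℕ} : e ∈ degSet d m ↔ deg e = m := by
  constructor
  · intro h; exact (Finset.mem_filter.mp h).2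
  · intro h
    exact Finset.mem_filter.mpr ⟨Finset.mem_Iic.mpr (le_cst_of_deg_le (le_of_eq h)), h⟩

/-- key shift identity for sums over degree sets -/
lemma sum_shift (c : MvPowerSeries (Fin d) A) (s : Fin d) (w : (Fin d →₀ ℕ) → A) (m : ℕ) :
    ∑ e ∈ degSet d (m + 1), coeff e (c * X s) * w e
      = ∑ u ∈ degSet d m, coeff u c * w (u + single s 1) := by
  classical
  have hX : (X s : MvPowerSeries (Fin d) A) = monomial (single s 1) 1 := rfl
  simp only [hX, coeff_mul_monomial, mul_one, ite_mul, zero_mul]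
  rw [← Finset.sum_filter]
  refine Finset.sum_bij' (i := fun e _ => e - single s 1) (j := fun u _ => u + single s 1)
    ?_ ?_ ?_ ?_ ?_
  · intro e he
    rw [Finset.mem_filter] at he
    obtain ⟨he1, he2⟩ := he
    rw [mem_degSet] at he1 ⊢
    have heq : e - single s 1 + single s 1 = e := tsub_add_cancel_of_le he2
    have := congrArg deg heq
    rw [deg_add, deg_single] at this
    omega
  · intro u hu
    rw [Finset.mem_filter]
    rw [mem_degSet] at hu ⊢
    constructor
    · rw [deg_add, deg_single, hu]
    · exact le_add_self
  · intro e he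
    rw [Finset.mem_filter] at he
    exact tsub_add_cancel_of_le he.2
  · intro u _
    exact add_tsub_cancel_right u (single s 1)
  · intro e he
    rw [Finset.mem_filter] at he
    rw [tsub_add_cancel_of_le he.2]

end Main

end Subst

open Subst in
/-- For `d ≥ 2` and `R = ℤ_p[[X_1,…,X_d]]`, the intersection, over all bases
`(ζ_1,…,ζ_d)` for `R`, of the ideals `ζ_1R + ⋯ + ζ_{d−1}R` is zero. -/
theorem iInf_base_span_eq_bot (p : ℕ) [Fact p.Prime] (d : ℕ) (hd : 2 ≤ d) :
    (⨅ ζ ∈ {ζ : Fin d → MvPowerSeries (Fin d) ℤ_[p] | IsBase p d ζ},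
      Ideal.span (Set.range fun j : Fin (d - 1) => ζ (Fin.castLE (Nat.sub_le d 1) j))) =
    ⊥ := by
  classical
  rw [eq_bot_iff]
  intro f hf
  rw [Ideal.mem_bot]
  -- notation
  set L : Fin d := ⟨d - 1, by omega⟩ with hL
  set cL : Fin (d - 1) → Fin d := Fin.castLE (Nat.sub_le d 1) with hcL
  have hcL_ne : ∀ j : Fin (d - 1), cL j ≠ L := by
    intro j h
    have : (j : ℕ) = d - 1 := congrArg Fin.val h
    omega
  have hcL_inj : Function.Injective cL := Fin.castLE_injective _
  -- membership in each linear ideal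
  have hmem : ∀ a : Fin (d - 1) → ℤ_[p], ∃ c : Fin (d - 1) → MvPowerSeries (Fin d) ℤ_[p],
      ∑ j, c j * (X (cL j) + C (a j) * X L) = f := by
    intro a
    set t : Fin d → ℤ_[p] := fun k => if h : (k : ℕ) < d - 1 then a ⟨k, h⟩ else 0 with ht
    have htL : t L = 0 := by simp [ht, hL]
    have hbase : IsBase p d (zeta ℤ_[p] L t) :=
      ⟨substEquiv ℤ_[p] L t htL, fun j => substEquiv_X L t htL j⟩
    have hf' : f ∈ Ideal.span (Set.range fun j : Fin (d - 1) => zeta ℤ_[p] L t (cL j)) := by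
      have h' := Ideal.mem_iInf.mp hf (zeta ℤ_[p] L t)
      exact Ideal.mem_iInf.mp h' hbase
    have hgen : (fun j : Fin (d - 1) => zeta ℤ_[p] L t (cL j))
        = fun j => X (cL j) + C (a j) * X L := by
      funext j
      have h1 : ((cL j : Fin d) : ℕ) < d - 1 := by
        have : ((cL j : Fin d) : ℕ) = (j : ℕ) := rfl
        omega
      have h2 : t (cL j) = a j := by
        have heq : t (cL j)
            = if h : ((cL j : Fin d) : ℕ) < d - 1 then a ⟨(cL j : Fin d), h⟩ else 0 := rfl
        rw [heq, dif_pos h1]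
        exact congrArg a (Fin.ext rfl)
      rw [zeta, h2]
    rw [hgen] at hf'
    exact Ideal.mem_span_range_iff_exists_fun.mp hf'
  -- evaluation sums vanish
  have hsum : ∀ (x : Fin (d - 1) → ℤ_[p]) (m : ℕ),
      ∑ e ∈ degSet d m, coeff e f * ∏ j, x j ^ e (cL j) = 0 := by
    intro x m
    obtain ⟨c, hc⟩ := hmem (fun j => -x j)
    set w : (Fin d →₀ ℕ) → ℤ_[p] := fun e => ∏ j, x j ^ e (cL j) with hw
    have hw1 : ∀ (j₀ : Fin (d - 1)) (u : Fin d →₀ ℕ),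
        w (u + single (cL j₀) 1) = x j₀ * w u := by
      intro j₀ u
      rw [hw]
      simp only [Finsupp.add_apply, single_apply]
      have : ∀ j : Fin (d - 1), x j ^ (u (cL j) + if cL j₀ = cL j then 1 else 0)
          = x j ^ u (cL j) * (if j₀ = j then x j else 1) := by
        intro j
        by_cases h : j₀ = j
        · subst h; rw [if_pos rfl, if_pos rfl, pow_add, pow_one]
        · rw [if_neg h, if_neg (fun hh => h (hcL_inj hh)), add_zero, mul_one]
      simp only [this]
      rw [Finset.prod_mul_distrib, Finset.prod_ite_eq (Finset.univ) j₀ (fun j => x j),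
        if_pos (Finset.mem_univ _)]
      ring
    have hw2 : ∀ u : Fin d →₀ ℕ, w (u + single L 1) = w u := by
      intro u
      rw [hw]
      refine Finset.prod_congr rfl fun j _ => ?_
      simp [single_apply, (hcL_ne j).symm]
    rw [← hc]
    have split : ∀ e : Fin d →₀ ℕ,
        coeff e (∑ j, c j * (X (cL j) + C (-x j) * X L)) * w e
          = ∑ j, (coeff e (c j * X (cL j)) * w e
              + (-x j) * (coeff e (c j * X L) * w e)) := by
      intro e
      rw [map_sum, Finset.sum_mul]
      refine Finset.sum_congr rfl fun j _ => ?_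
      rw [mul_add, map_add, add_mul]
      congr 1
      rw [show c j * (C (-x j) * X L) = C (-x j) * (c j * X L) by
        ring, coeff_C_mul]
      ring
    simp only [show ∀ e : Fin d →₀ ℕ, ∏ j, x j ^ e (cL j) = w e from fun _ => rfl, split]
    rw [Finset.sum_comm]
    refine Finset.sum_eq_zero fun j _ => ?_
    rw [Finset.sum_add_distrib]
    cases m with
    | zero =>
        have h0 : degSet d 0 = {0} := by
          ext e
          rw [mem_degSet, Finset.mem_singleton]
          constructor
          · intro h
            ext i
            have h2 := apply_le_deg e i
            simp only [Finsupp.coe_zero, Pi.zero_apply]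
            omega
          · rintro rfl; simp [deg]
        rw [h0]
        simp only [Finset.sum_singleton]
        have hz : ∀ s : Fin d, coeff (0 : Fin d →₀ ℕ) (c j * X s) = 0 := by
          intro s
          rw [coeff_zero_eq_constantCoeff_apply, map_mul, constantCoeff_X, mul_zero]
        rw [hz, hz]
        ring
    | succ m' =>
        rw [sum_shift, ← Finset.mul_sum, sum_shift]
        simp only [hw1, hw2]
        have hterm : ∀ u : Fin d →₀ ℕ,
            coeff u (c j) * (x j * w u) = x j * (coeff u (c j) * w u) := by
          intro u; ring
        simp only [hterm]
        rw [← Finset.mul_sum]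
        ring
  -- conclude each coefficient vanishes
  ext b
  rw [map_zero]
  set m := deg b with hm
  set P : MvPolynomial (Fin (d - 1)) ℤ_[p] :=
    ∑ e ∈ degSet d m, MvPolynomial.monomial (equivFunOnFinite.symm fun j => e (cL j))
      (coeff e f) with hP
  have heval : ∀ x : Fin (d - 1) → ℤ_[p], MvPolynomial.eval x P = 0 := by
    intro x
    rw [hP, map_sum]
    have hev : ∀ e ∈ degSet d m,
        MvPolynomial.eval x (MvPolynomial.monomial
            (equivFunOnFinite.symm fun j => e (cL j)) (coeff e f))
          = coeff e f * ∏ j, x j ^ e (cL j) := by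
      intro e _
      rw [MvPolynomial.eval_monomial]
      congr 1
      rw [Finsupp.prod_fintype]
      · rfl
      · intro j; exact pow_zero _
    rw [Finset.sum_congr rfl hev]
    exact hsum x m
  have hP0 : P = 0 := MvPolynomial.funext fun x => by rw [heval x, map_zero]
  have hcoeff : MvPolynomial.coeff (equivFunOnFinite.symm fun j => b (cL j)) P
      = coeff b f := by
    rw [hP, MvPolynomial.coeff_sum]
    rw [Finset.sum_eq_single b ?h0 ?h1]
    · rw [MvPolynomial.coeff_monomial, if_pos rfl]
    case h1 => exact fun hb => absurd (mem_degSet.mpr rfl) hb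
    case h0 =>
      intro e he hne
      rw [MvPolynomial.coeff_monomial, if_neg]
      intro hrestr
      apply hne
      have hvals : ∀ j : Fin (d - 1), e (cL j) = b (cL j) := fun j =>
        congrFun (equivFunOnFinite.symm.injective hrestr) j
      have hErest : ∀ i : Fin d, i ≠ L → e i = b i := by
        intro i hi
        have hine : (i : ℕ) ≠ d - 1 := fun hh => hi (Fin.ext hh)
        have hilt : (i : ℕ) < d - 1 := by
          have := i.isLt; omega
        have hieq : i = cL ⟨(i : ℕ), hilt⟩ := Fin.ext rfl
        rw [hieq]
        exact hvals ⟨(i : ℕ), hilt⟩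
      have hsum_erase : ∑ i ∈ Finset.univ.erase L, e i = ∑ i ∈ Finset.univ.erase L, b i :=
        Finset.sum_congr rfl fun i hi => hErest i (Finset.mem_erase.mp hi).1
      have h1 : (∑ i ∈ Finset.univ.erase L, e i) + e L = deg e :=
        Finset.sum_erase_add Finset.univ e (Finset.mem_univ L)
      have h2 : (∑ i ∈ Finset.univ.erase L, b i) + b L = deg b :=
        Finset.sum_erase_add Finset.univ b (Finset.mem_univ L)
      have hdege : deg e = deg b := mem_degSet.mp he
      have hLval : e L = b L := by omega
      ext i
      by_cases hi : i = L
      · rw [hi]; exact hLval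
      · exact hErest i hi
  rw [hP0] at hcoeff
  rw [← hcoeff, MvPolynomial.coeff_zero]
end

section
/- Let p be a prime, G a pro-p group, and K a closed normal subgroup of G such that K is contained in the closure of the commutator subgroup [K,G] (the subgroup generated by all commutators [k,g] with k ∈ K, g ∈ G). Then K is trivial. -/
/-- In a nilpotent group, a subgroup contained in its own commutator with the
whole group is trivial. -/
lemma aux_nilpotent_commutator_bot {Q : Type*} [Group Q] [Group.IsNilpotent Q]
    (H : Subgroup Q) (h : H ≤ ⁅H, (⊤ : Subgroup Q)⁆) : H = ⊥ := by
  have key : ∀ n, H ≤ (⊤ : Subgroup Q).lowerCentralSeries n := by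
    intro n
    induction n with
    | zero => exact le_top
    | succ n ih =>
      rw [Subgroup.lowerCentralSeries_succ]
      exact h.trans (Subgroup.commutator_mono ih le_rfl)
  obtain ⟨n, hn⟩ := Subgroup.nilpotent_iff_lowerCentralSeries.mp ‹_›
  exact le_bot_iff.mp (hn ▸ key n)

/-- A pro-`p` group: a profinite group in which every open normal subgroup has
index a power of `p`. Here the profiniteness (compact, Hausdorff, totally
disconnected topological group) is carried by the instance assumptions. -/
theorem closed_normal_subgroup_le_closure_commutator_eq_bot
    (p : ℕ) (hp : p.Prime) (G : Type*) [Group G] [TopologicalSpace G]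
    [IsTopologicalGroup G] [CompactSpace G] [T2Space G] [TotallyDisconnectedSpace G]
    (hpro : ∀ N : Subgroup G, N.Normal → IsOpen (N : Set G) → ∃ n : ℕ, N.index = p ^ n)
    (K : Subgroup G) (hKnormal : K.Normal) (hKclosed : IsClosed (K : Set G))
    (hK : K ≤ (⁅K, (⊤ : Subgroup G)⁆).topologicalClosure) :
    K = ⊥ := by
  haveI : Fact p.Prime := ⟨hp⟩
  -- Step 1: K is contained in every open normal subgroup N.
  have main : ∀ N : Subgroup G, N.Normal → IsOpen (N : Set G) → K ≤ N := by
    intro N hNnorm hNopen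
    obtain ⟨n, hn⟩ := hpro N hNnorm hNopen
    haveI : N.Normal := hNnorm
    haveI : N.FiniteIndex := ⟨by rw [hn]; exact pow_ne_zero n hp.pos.ne'⟩
    set f : G →* G ⧸ N := QuotientGroup.mk' N
    have hfsurj : Function.Surjective f := QuotientGroup.mk'_surjective N
    -- the preimage of the image of ⁅K,⊤⁆ is ⁅K,⊤⁆ ⊔ N, which is open hence closed
    have hcomapopen : IsOpen (((⁅K, (⊤ : Subgroup G)⁆.map f).comap f : Subgroup G) : Set G) := by
      apply Subgroup.isOpen_mono (H₁ := N) _ hNopen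
      intro x hx
      simp only [Subgroup.mem_comap, Subgroup.mem_map]
      exact ⟨1, Subgroup.one_mem _, by
        simp only [map_one, f, QuotientGroup.mk'_apply]
        exact ((QuotientGroup.eq_one_iff x).mpr hx).symm⟩
    have hcomapclosed : IsClosed (((⁅K, (⊤ : Subgroup G)⁆.map f).comap f : Subgroup G) : Set G) :=
      Subgroup.isClosed_of_isOpen _ hcomapopen
    have hsub : ⁅K, (⊤ : Subgroup G)⁆ ≤ (⁅K, (⊤ : Subgroup G)⁆.map f).comap f :=
      Subgroup.le_comap_map _ _
    have hKle : K ≤ (⁅K, (⊤ : Subgroup G)⁆.map f).comap f := by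
      refine hK.trans ?_
      exact Subgroup.topologicalClosure_minimal _ hsub hcomapclosed
    -- pass to the quotient, a finite p-group
    have hQcard : Nat.card (G ⧸ N) = p ^ n := hn ▸ rfl
    haveI : Finite (G ⧸ N) := Subgroup.finite_quotient_of_finiteIndex (H := N)
    have hQp : IsPGroup p (G ⧸ N) := IsPGroup.of_card hQcard
    haveI : Group.IsNilpotent (G ⧸ N) := hQp.isNilpotent
    have himle : K.map f ≤ ⁅K.map f, (⊤ : Subgroup (G ⧸ N))⁆ := by
      have := Subgroup.map_le_iff_le_comap.mpr hKle
      rwa [Subgroup.map_commutator, Subgroup.map_top_of_surjective f hfsurj] at this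
    have : K.map f = ⊥ := aux_nilpotent_commutator_bot _ himle
    intro x hx
    have : f x ∈ K.map f := Subgroup.mem_map_of_mem f hx
    rw [‹K.map f = ⊥›] at this
    simpa only [Subgroup.mem_bot, f, QuotientGroup.mk'_apply,
      QuotientGroup.eq_one_iff] using this
  -- Step 2: the intersection of open normal subgroups is trivial.
  rw [eq_bot_iff]
  intro x hx
  rw [Subgroup.mem_bot]
  by_contra hx1
  haveI : TotallySeparatedSpace G :=
    loc_compact_t2_tot_disc_iff_tot_sep.mp ‹TotallyDisconnectedSpace G›
  obtain ⟨U, hU, h1U, hxU⟩ :=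
    exists_isClopen_of_totally_separated (Ne.symm hx1 : (1 : G) ≠ x)
  obtain ⟨H, hH⟩ := IsTopologicalGroup.exist_openNormalSubgroup_sub_clopen_nhds_of_one hU h1U
  have := main H.toSubgroup H.isNormal' H.toOpenSubgroup.isOpen hx
  exact hxU (hH this)
end
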